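/- arXiv:1901.00384 — 9 statements merged into one kernel-verified Lean document; each statement's English description precedes it below -/
import Mathlib

section
/- Let r ≥ 1 and let Σ ⊆ ℝ^r be a subsemigroup graded by first component (deg(x) := x₁ ∈ ℤ for every x ∈ Σ) such that: some σ₀ ∈ Σ has deg(σ₀) = 1; the ℝ-linear span of Σ equals ℝ^r; the ℚ-linear span of Σ has dimension r as a ℚ-vector space; and the subgroup ⟨Σ⟩_ℤ of ℝ^r generated by Σ is not finitely generated. Then lim_{d→∞} H_Σ(d)/d^{r−1} = ∞, i.e. for every C > 0 there exists D such that for all integers d ≥ D the set Σ_d is infinite or #Σ_d ≥ C·d^{r−1}. -/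
open Filter Topology

/-!
Complete an element σ₀ ∈ Σ of degree 1, inside Σ, to an ℝ-basis σ₀, e₁, …, eₙ whose vectors have
degrees δᵢ ∈ ℕ. The group L they generate is finitely generated, so Σ meets infinitely many cosets
of L in ⟨Σ⟩_ℤ; shifting by multiples of σ₀ ∈ L gives, for every k, elements w₁, …, w_k ∈ Σ of a
common degree M in distinct cosets. The points w_j + ∑ aᵢ eᵢ + c σ₀ with 0 ≤ aᵢ ≤ A = ⌊(d - M)/Δ⌋,
Δ = 1 + ∑ δᵢ, and c chosen to reach degree d, are pairwise distinct (distinct cosets, resp. linear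
independence), so #Σ_d ≥ k (A + 1)ⁿ ≥ k (d / 2Δ)ⁿ for d ≥ 2M, with k arbitrary.
-/

open Set Submodule Module Function

theorem add_mem_of_mem_addSubmonoidClosure {M : Type*} [AddMonoid M] {S : Set M}
    (hadd : ∀ x ∈ S, ∀ y ∈ S, x + y ∈ S) {x y : M} (hx : x ∈ S)
    (hy : y ∈ AddSubmonoid.closure S) : x + y ∈ S := by
  induction hy using AddSubmonoid.closure_induction generalizing x with
  | mem y hy => exact hadd x hx y hy
  | zero => simpa
  | add y z _ _ hy hz => rw [← add_assoc]; exact hz (hy hx)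

theorem span_setOf_deg_eq_natCast_eq_top {V : Type*} [AddCommGroup V] [Module ℝ V]
    {S : Set V} (hadd : ∀ x ∈ S, ∀ y ∈ S, x + y ∈ S) (deg : V →+ ℝ)
    (hgr : ∀ x ∈ S, ∃ m : ℤ, deg x = m) (hS : span ℝ S = ⊤) {σ : V} (hσS : σ ∈ S)
    (hσ : deg σ = 1) : span ℝ {x ∈ S | ∃ m : ℕ, deg x = m} = ⊤ := by
  refine eq_top_iff.2 (hS ▸ span_le.2 fun x hx => ?_)
  obtain ⟨m, hm⟩ := hgr x hx
  have hσT : σ ∈ {x ∈ S | ∃ m : ℕ, deg x = m} := ⟨hσS, 1, by simp [hσ]⟩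
  have hxT : x + (-m).toNat • σ ∈ {x ∈ S | ∃ m : ℕ, deg x = m} := by
    refine ⟨add_mem_of_mem_addSubmonoidClosure hadd hx
      (nsmul_mem (AddSubmonoid.subset_closure hσS) _), m.toNat, ?_⟩
    rw [map_add, map_nsmul, hm, hσ, nsmul_one]
    exact_mod_cast (show m + ((-m).toNat : ℤ) = m.toNat by omega)
  simpa using sub_mem (subset_span hxT) (nsmul_mem (subset_span hσT) (-m).toNat)

theorem exists_finset_linearIndependent_of_span_eq_top {K V : Type*} [DivisionRing K]
    [AddCommGroup V] [Module K V] [FiniteDimensional K V] {T : Set V} (hT : span K T = ⊤)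
    {σ : V} (hσT : σ ∈ T) (hσ : σ ≠ 0) :
    ∃ E : Finset V, ↑E ⊆ T ∧ E.card + 1 = finrank K V ∧
      LinearIndependent K ((↑) : E → V) ∧ σ ∉ span K (E : Set V) := by
  classical
  have hσT' : {σ} ⊆ T := singleton_subset_iff.2 hσT
  have hli := LinearIndepOn.singleton (R := K) (v := id) hσ
  set b := hli.extend hσT'
  have hσb : σ ∈ b := hli.subset_extend hσT' rfl
  have hbE : insert σ (↑(b.toFinset.erase σ) : Set V) = b := by
    simp [insert_eq_of_mem hσb]
  have hbli : LinearIndepOn K id b := hli.linearIndepOn_extend hσT'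
  rw [← hbE, linearIndepOn_id_insert (by simp)] at hbli
  refine ⟨b.toFinset.erase σ, ?_, ?_, hbli⟩
  · exact (Finset.coe_subset.2 (Finset.erase_subset _ _)).trans
      (by simpa using hli.extend_subset hσT')
  · rw [Finset.card_erase_add_one (mem_toFinset.2 hσb), ← finrank_span_set_eq_card
      (hli.linearIndepOn_extend hσT'), hli.span_extend_eq_span, hT, finrank_top]

theorem infinite_image_mk_of_not_fg {G : Type*} [AddCommGroup G] {S : Set G}
    {L : AddSubgroup G} (hL : L.FG) (hLS : L ≤ AddSubgroup.closure S)
    (hS : ¬ (AddSubgroup.closure S).FG) : ((↑) '' S : Set (G ⧸ L)).Infinite := by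
  intro hfin
  obtain ⟨F, hFS, hF⟩ := exists_subset_bijOn S ((↑) : G → G ⧸ L)
  have hFfin : F.Finite := Finite.of_finite_image (hF.image_eq ▸ hfin) hF.injOn
  have hFL : AddSubgroup.closure S = AddSubgroup.closure F ⊔ L := by
    refine le_antisymm (AddSubgroup.closure_le _ |>.2 fun s hs => ?_)
      (sup_le (AddSubgroup.closure_mono hFS) hLS)
    obtain ⟨f, hf, hfs⟩ := hF.surjOn (mem_image_of_mem _ hs)
    rw [← add_neg_cancel_left f s]
    exact AddSubgroup.add_mem_sup (AddSubgroup.subset_closure hf) (QuotientAddGroup.eq.1 hfs)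
  exact hS (hFL ▸ ((AddSubgroup.fg_iff _).2 ⟨F, rfl, hFfin⟩).sup hL)

theorem exists_injective_mk_of_deg_eq {V : Type*} [AddCommGroup V] {S : Set V}
    (hadd : ∀ x ∈ S, ∀ y ∈ S, x + y ∈ S) (deg : V →+ ℝ) (hgr : ∀ x ∈ S, ∃ m : ℤ, deg x = m)
    {L : AddSubgroup V} {σ : V} (hσS : σ ∈ S) (hσL : σ ∈ L) (hσ : deg σ = 1)
    (hS : ((↑) '' S : Set (V ⧸ L)).Infinite) (k : ℕ) :
    ∃ (M : ℕ) (w : Fin k → V), (∀ j, w j ∈ S) ∧ (∀ j, deg (w j) = M) ∧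
      Injective fun j => (w j : V ⧸ L) := by
  choose x hxS hx using fun j : Fin k => (hS.natEmbedding _ j).2
  choose m hm using fun j => hgr (x j) (hxS j)
  set M := Finset.univ.sup fun j => (m j).toNat
  refine ⟨M, fun j => x j + (M - m j).toNat • σ, fun j => ?_, fun j => ?_, fun j j' h => ?_⟩
  · exact add_mem_of_mem_addSubmonoidClosure hadd (hxS j)
      (nsmul_mem (AddSubmonoid.subset_closure hσS) _)
  · have hmM : (m j).toNat ≤ M := Finset.le_sup (f := fun j => (m j).toNat) (Finset.mem_univ j)
    rw [map_add, map_nsmul, hm, hσ, nsmul_one]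
    exact_mod_cast (show m j + ((M - m j).toNat : ℤ) = M by omega)
  · have hmk (j) : ((x j + (M - m j).toNat • σ : V) : V ⧸ L) = hS.natEmbedding _ j := by
      rw [QuotientAddGroup.mk_add, (QuotientAddGroup.eq_zero_iff _).2 (L.nsmul_mem hσL _),
        add_zero, hx]
    simp only [hmk] at h
    exact Fin.val_injective ((hS.natEmbedding _).injective (Subtype.ext h))

theorem LinearIndependent.eq_of_sum_nsmul_add_nsmul_eq {V ι : Type*} [AddCommGroup V]
    [Module ℝ V] [Fintype ι] {e : ι → V} (he : LinearIndependent ℝ e) {σ : V}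
    (hσ : σ ∉ span ℝ (range e)) {a a' : ι → ℕ} {c c' : ℕ}
    (h : ∑ i, a i • e i + c • σ = ∑ i, a' i • e i + c' • σ) : a = a' := by
  classical
  have hli := ((he.option hσ).restrict_scalars' ℕ)
  have := Fintype.linearIndependent_iffₛ.1 hli (fun o => o.elim c a) (fun o => o.elim c' a')
    (by simpa [Fintype.sum_option, add_comm] using h)
  exact funext fun i => this (some i)

theorem exists_injective_prod_to_deg_eq {V ι κ : Type*} [AddCommGroup V] [Module ℝ V]
    [Fintype ι] {S : Set V} (hadd : ∀ x ∈ S, ∀ y ∈ S, x + y ∈ S) (deg : V →+ ℝ)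
    {L : AddSubgroup V} {σ : V} (hσS : σ ∈ S) (hσL : σ ∈ L) (hσ : deg σ = 1)
    {e : ι → V} (heS : ∀ i, e i ∈ S) (heL : ∀ i, e i ∈ L) (he : LinearIndependent ℝ e)
    (hσe : σ ∉ span ℝ (range e)) {δ : ι → ℕ} (hδ : ∀ i, deg (e i) = δ i)
    {w : κ → V} {M : ℕ} (hwS : ∀ j, w j ∈ S) (hw : ∀ j, deg (w j) = M)
    (hwL : Injective fun j => (w j : V ⧸ L)) {A d : ℕ} (hd : M + A * ∑ i, δ i ≤ d) :
    ∃ f : κ × (ι → Fin (A + 1)) → V, Injective f ∧ ∀ p, f p ∈ S ∧ deg (f p) = d := by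
  set c : (ι → Fin (A + 1)) → ℕ := fun a => d - M - ∑ i, (a i : ℕ) * δ i
  set y : (ι → Fin (A + 1)) → V := fun a => ∑ i, (a i : ℕ) • e i + c a • σ
  have hyL (a) : y a ∈ L :=
    L.add_mem (L.sum_mem fun i _ => L.nsmul_mem (heL i) _) (L.nsmul_mem hσL _)
  refine ⟨fun p => w p.1 + y p.2, ?_, fun ⟨j, a⟩ => ⟨?_, ?_⟩⟩
  · rintro ⟨j, a⟩ ⟨j', a'⟩ h
    obtain rfl : j = j' := hwL <| QuotientAddGroup.eq.2 <| by
      have h' : w j + y a = w j' + y a' := h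
      rw [show -w j + w j' = y a - y a' by
        rw [neg_add_eq_sub, sub_eq_sub_iff_add_eq_add, add_comm (y a), h']]
      exact sub_mem (hyL a) (hyL a')
    have := he.eq_of_sum_nsmul_add_nsmul_eq hσe (add_left_cancel h)
    exact Prod.ext rfl (funext fun i => Fin.ext (congrFun this i))
  · exact add_mem_of_mem_addSubmonoidClosure hadd (hwS j)
      (add_mem (sum_mem fun i _ => nsmul_mem (AddSubmonoid.subset_closure (heS i)) _)
        (nsmul_mem (AddSubmonoid.subset_closure hσS) _))
  · have hle : ∑ i, (a i : ℕ) * δ i ≤ A * ∑ i, δ i := by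
      rw [Finset.mul_sum]
      exact Finset.sum_le_sum fun i _ => Nat.mul_le_mul_right _ (Fin.is_le _)
    simp only [y, c, map_add, map_sum, map_nsmul, hw, hδ, hσ, nsmul_eq_mul, mul_one]
    rw [Nat.cast_sub (by omega), Nat.cast_sub (by omega)]
    push_cast
    ring

theorem mul_pow_le_card_deg_eq {V ι κ : Type*} [AddCommGroup V] [Module ℝ V]
    [Fintype ι] [Finite κ] {S : Set V} (hadd : ∀ x ∈ S, ∀ y ∈ S, x + y ∈ S) (deg : V →+ ℝ)
    {L : AddSubgroup V} {σ : V} (hσS : σ ∈ S) (hσL : σ ∈ L) (hσ : deg σ = 1)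
    {e : ι → V} (heS : ∀ i, e i ∈ S) (heL : ∀ i, e i ∈ L) (he : LinearIndependent ℝ e)
    (hσe : σ ∉ span ℝ (range e)) {δ : ι → ℕ} (hδ : ∀ i, deg (e i) = δ i)
    {w : κ → V} {M : ℕ} (hwS : ∀ j, w j ∈ S) (hw : ∀ j, deg (w j) = M)
    (hwL : Injective fun j => (w j : V ⧸ L)) {A d : ℕ} (hd : M + A * ∑ i, δ i ≤ d)
    (hfin : {x ∈ S | deg x = d}.Finite) :
    Nat.card κ * (A + 1) ^ Fintype.card ι ≤ Nat.card {x ∈ S | deg x = d} := by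
  obtain ⟨f, hf, hfS⟩ := exists_injective_prod_to_deg_eq hadd deg hσS hσL hσ heS heL he hσe hδ
    hwS hw hwL hd
  have := hfin.to_subtype
  have hcard := Nat.card_le_card_of_injective (fun p => (⟨f p, hfS p⟩ : {x ∈ S | deg x = d}))
    fun p q h => hf (congrArg Subtype.val h)
  rwa [Nat.card_prod, Nat.card_fun, Nat.card_fin, Nat.card_eq_fintype_card (α := ι)] at hcard

theorem le_mul_pow_div_add_one {C : ℝ} (hC : 0 ≤ C) {k n Δ M d : ℕ} (hΔ : 0 < Δ)
    (hk : C * (2 * Δ : ℝ) ^ n ≤ k) (hd : 2 * M ≤ d) :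
    C * (d : ℝ) ^ n ≤ (k * ((d - M) / Δ + 1) ^ n : ℕ) := by
  have hdA : d ≤ 2 * Δ * ((d - M) / Δ + 1) := by
    have := Nat.lt_div_mul_add (a := d - M) hΔ
    calc d ≤ 2 * ((d - M) / Δ * Δ + Δ) := by omega
      _ = _ := by ring
  calc C * (d : ℝ) ^ n ≤ C * ((2 * Δ : ℝ) * (((d - M) / Δ + 1 : ℕ) : ℝ)) ^ n := by
        gcongr; exact_mod_cast hdA
    _ = C * (2 * Δ : ℝ) ^ n * (((d - M) / Δ + 1 : ℕ) : ℝ) ^ n := by rw [mul_pow, mul_assoc]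
    _ ≤ (k * ((d - M) / Δ + 1) ^ n : ℕ) := by push_cast; gcongr

theorem stmt1_general (n : ℕ) (S : Set (Fin (n + 1) → ℝ))
    (hadd : ∀ x ∈ S, ∀ y ∈ S, x + y ∈ S)
    (hgr : ∀ x ∈ S, ∃ m : ℤ, x 0 = (m : ℝ))
    (hdeg1 : ∃ σ₀ ∈ S, σ₀ 0 = 1)
    (hspanR : Submodule.span ℝ S = ⊤)
    (hnfg : ¬ (AddSubgroup.closure S).FG) :
    ∀ C : ℝ, 0 < C → ∃ D : ℕ, ∀ d : ℕ, D ≤ d →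
      {x ∈ S | x 0 = (d : ℝ)}.Infinite ∨
      C * (d : ℝ) ^ n ≤ (Nat.card {x ∈ S | x 0 = (d : ℝ)} : ℝ) := by
  obtain ⟨σ₀, hσ₀S, hσ₀⟩ := hdeg1
  let deg : (Fin (n + 1) → ℝ) →+ ℝ := Pi.evalAddMonoidHom (fun _ => ℝ) 0
  obtain ⟨E, hES, hEcard, hEli, hσ₀E⟩ := exists_finset_linearIndependent_of_span_eq_top
    (span_setOf_deg_eq_natCast_eq_top hadd deg hgr hspanR hσ₀S hσ₀)
    ⟨hσ₀S, 1, by simpa [deg] using hσ₀⟩ fun h => by simp [h] at hσ₀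
  rw [Module.finrank_fin_fun, add_left_inj] at hEcard
  choose δ hδ using fun x : E => (hES x.2).2
  set L := AddSubgroup.closure (insert σ₀ (E : Set (Fin (n + 1) → ℝ)))
  have hσ₀L : σ₀ ∈ L := AddSubgroup.subset_closure (mem_insert _ _)
  have hLS : L ≤ AddSubgroup.closure S := (AddSubgroup.closure_le _).2 <| insert_subset
    (AddSubgroup.subset_closure hσ₀S) fun x hx => AddSubgroup.subset_closure (hES hx).1
  have hinf := infinite_image_mk_of_not_fg
    ((AddSubgroup.fg_iff _).2 ⟨_, rfl, E.finite_toSet.insert σ₀⟩) hLS hnfg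
  intro C hC
  set Δ := ∑ x, δ x + 1
  obtain ⟨M, w, hwS, hw, hwL⟩ :=
    exists_injective_mk_of_deg_eq hadd deg hgr hσ₀S hσ₀L hσ₀ hinf ⌈C * (2 * Δ : ℝ) ^ n⌉₊
  refine ⟨2 * M, fun d hd => (Set.finite_or_infinite _).symm.imp_right fun hfin => ?_⟩
  have hA : M + (d - M) / Δ * ∑ x, δ x ≤ d := by
    have := (Nat.mul_le_mul_left ((d - M) / Δ) (Nat.le_succ (∑ x, δ x))).trans
      (Nat.div_mul_le_self (d - M) Δ)
    omega
  have hcard := mul_pow_le_card_deg_eq hadd deg hσ₀S hσ₀L hσ₀ (e := ((↑) : E → _))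
    (fun x => (hES x.2).1) (fun x => AddSubgroup.subset_closure (mem_insert_of_mem _ x.2)) hEli
    (by simpa using hσ₀E) hδ hwS hw hwL hA hfin
  rw [Nat.card_fin, Fintype.card_coe, hEcard] at hcard
  exact (le_mul_pow_div_add_one hC.le (Nat.succ_pos _) (Nat.le_ceil _) hd).trans
    (by exact_mod_cast hcard)

theorem stmt1 (n : ℕ) (S : Set (Fin (n + 1) → ℝ)) (hne : S.Nonempty)
    (hadd : ∀ x ∈ S, ∀ y ∈ S, x + y ∈ S)
    (hgr : ∀ x ∈ S, ∃ m : ℤ, x 0 = (m : ℝ))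
    (hdeg1 : ∃ σ₀ ∈ S, σ₀ 0 = 1)
    (hspanR : Submodule.span ℝ S = ⊤)
    (hspanQ : Module.finrank ℚ ↥(Submodule.span ℚ S) = n + 1)
    (hnfg : ¬ (AddSubgroup.closure S).FG) :
    ∀ C : ℝ, 0 < C → ∃ D : ℕ, ∀ d : ℕ, D ≤ d →
      {x ∈ S | x 0 = (d : ℝ)}.Infinite ∨
      C * (d : ℝ) ^ n ≤ (Nat.card {x ∈ S | x 0 = (d : ℝ)} : ℝ) :=
  stmt1_general n S hadd hgr hdeg1 hspanR hnfg
end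

section
/- Let M be a commutative monoid (written additively), r ≥ 1, and let ι₁, ι₂ : M → ℝ^r be injective additive maps such that for both j = 1, 2: (i) the first components agree, i.e. (ι₁(σ))₁ = (ι₂(σ))₁ =: deg(σ) ∈ ℤ for every σ ∈ M; (ii) the subgroup of ℝ^r generated by ι_j(M) equals ℤ^r. For j = 1, 2 let Δ_j ⊆ ℝ^{r−1} be the topological closure of { (1/deg(σ))·((ι_j(σ))₂, …, (ι_j(σ))_r) : σ ∈ M, deg(σ) ≠ 0 }. Then there exist a matrix A ∈ GL_{r−1}(ℤ) (an integer (r−1)×(r−1) matrix with integer inverse) and a vector b ∈ ℤ^{r−1} such that the affine map y ↦ A·y + b carries Δ₁ onto Δ₂. -/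
/-!
Both `ι₁` and `ι₂` extend to isomorphisms from the Grothendieck group of `M` onto `ℤ^r`, so
`ι₂ = P ∘ ι₁` for some `P ∈ GL_r(ℤ)`. Since `P` preserves the first coordinate, its first row is
`e₁`, so `P = [[1, 0], [b, A]]` with `A ∈ GL_{r-1}(ℤ)`, and on the chart `{x₁ = 1}` the map `P`
acts as the affine map `y ↦ A y + b`. This map is a homeomorphism, so it carries the closure of
the normalized points of `ι₁` onto that of `ι₂`.
-/

open Function Matrix

namespace Algebra.GrothendieckAddGroup

variable {M G : Type*} [AddCommMonoid M] [AddCommGroup G]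

theorem lift_of (f : M →+ G) (m : M) : lift f (of m) = f m :=
  DFunLike.congr_fun (lift.symm_apply_apply f) m

theorem lift_bijective {f : M →+ G} (hf : Injective f)
    (hf' : AddSubgroup.closure (Set.range f) = ⊤) : Bijective (lift f) := by
  refine ⟨(injective_iff_map_eq_zero _).2 fun x hx => ?_, ?_⟩
  · induction x using AddLocalization.ind with
    | H m =>
      obtain ⟨a, b⟩ := m
      have hmk : AddLocalization.mk a b = of a - of (b : M) := by
        simp [← AddLocalization.mk_zero_eq_addMonoidOf_mk]
      rw [hmk, map_sub, lift_of, lift_of, sub_eq_zero] at hx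
      rw [hmk, hf hx, sub_self]
  · refine AddMonoidHom.range_eq_top.1 (top_le_iff.1 (hf' ▸ (AddSubgroup.closure_le _).2 ?_))
    rintro _ ⟨m, rfl⟩
    exact ⟨of m, lift_of f m⟩

end Algebra.GrothendieckAddGroup

open Algebra in
theorem exists_addEquiv_apply_eq_of_closure_range_eq_top {M G H : Type*} [AddCommMonoid M]
    [AddCommGroup G] [AddCommGroup H] {f : M →+ G} {g : M →+ H}
    (hf : Injective f) (hg : Injective g) (hf' : AddSubgroup.closure (Set.range f) = ⊤)
    (hg' : AddSubgroup.closure (Set.range g) = ⊤) : ∃ e : G ≃+ H, ∀ m, e (f m) = g m := by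
  refine ⟨(AddEquiv.ofBijective _ (GrothendieckAddGroup.lift_bijective hf hf')).symm.trans
    (AddEquiv.ofBijective _ (GrothendieckAddGroup.lift_bijective hg hg')), fun m => ?_⟩
  have hsymm : (AddEquiv.ofBijective _ (GrothendieckAddGroup.lift_bijective hf hf')).symm (f m) =
      GrothendieckAddGroup.of m :=
    (AddEquiv.symm_apply_eq _).2 (GrothendieckAddGroup.lift_of f m).symm
  rw [AddEquiv.trans_apply, hsymm, AddEquiv.ofBijective_apply, GrothendieckAddGroup.lift_of]

theorem exists_isUnit_mulVec_eq {M ι : Type*} [AddCommMonoid M] [Fintype ι] [DecidableEq ι]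
    {f g : M →+ ι → ℤ} (hf : Injective f) (hg : Injective g)
    (hf' : AddSubgroup.closure (Set.range f) = ⊤) (hg' : AddSubgroup.closure (Set.range g) = ⊤) :
    ∃ P : Matrix ι ι ℤ, IsUnit P ∧ ∀ m, P *ᵥ f m = g m := by
  obtain ⟨e, he⟩ := exists_addEquiv_apply_eq_of_closure_range_eq_top hf hg hf' hg'
  refine ⟨LinearMap.toMatrix' e.toIntLinearEquiv.toLinearMap, ?_, fun m => ?_⟩
  · exact LinearMap.isUnit_toMatrix'_iff.2 ((Module.End.isUnit_iff _).2 e.bijective)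
  · rw [LinearMap.toMatrix'_mulVec]
    exact he m

theorem exists_intCast_lift_of_closure_range_eq {M ι : Type*} [AddCommMonoid M] (f : M →+ ι → ℝ)
    (hf : (AddSubgroup.closure (Set.range f) : Set (ι → ℝ)) = {x | ∀ i, ∃ m : ℤ, x i = (m : ℝ)}) :
    ∃ g : M →+ ι → ℤ, (∀ m, Int.cast ∘ g m = f m) ∧ AddSubgroup.closure (Set.range g) = ⊤ := by
  let c : (ι → ℤ) →+ ι → ℝ := (Int.castAddHom ℝ).compLeft ι
  have hc : Injective c := fun x y h => funext fun i => Int.cast_injective (congrFun h i)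
  have hcl : AddSubgroup.closure (Set.range f) = c.range := by
    refine SetLike.coe_injective (hf.trans (Set.ext fun x => ?_))
    exact ⟨fun h => ⟨fun i => (h i).choose, funext fun i => (h i).choose_spec.symm⟩,
      fun ⟨y, hy⟩ i => ⟨y i, (congrFun hy i).symm⟩⟩
  let g : M →+ ι → ℤ := (AddMonoidHom.ofInjective hc).symm.toAddMonoidHom.comp
    (f.codRestrict c.range fun m => hcl ▸ AddSubgroup.subset_closure ⟨m, rfl⟩)
  have hcg : c ∘ g = f := funext fun m => AddMonoidHom.apply_ofInjective_symm hc _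
  refine ⟨g, congrFun hcg, AddSubgroup.map_injective hc ?_⟩
  rw [AddMonoidHom.map_closure, ← Set.range_comp, hcg, hcl, AddMonoidHom.range_eq_map]

theorem Matrix.row_eq_single_of_mulVec_apply_eq {ι R : Type*} [Fintype ι] [DecidableEq ι]
    [CommRing R] {P : Matrix ι ι R} {i : ι} {s : Set (ι → R)} (hs : AddSubgroup.closure s = ⊤)
    (h : ∀ x ∈ s, (P *ᵥ x) i = x i) : P i = Pi.single i 1 := by
  have hall : ∀ x, (P *ᵥ x) i = x i := DFunLike.congr_fun <| AddMonoidHom.eq_of_eqOn_dense hs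
    (f := (Pi.evalAddMonoidHom (fun _ => R) i).comp P.mulVecLin.toAddMonoidHom)
    (g := Pi.evalAddMonoidHom (fun _ => R) i) h
  funext j
  simpa [mulVec_single_one, Pi.single_apply, eq_comm] using hall (Pi.single j 1)

theorem Matrix.isUnit_submatrix_succ_succ {R : Type*} [CommRing R] {n : ℕ}
    {P : Matrix (Fin (n + 1)) (Fin (n + 1)) R} (hP : IsUnit P) (h0 : P 0 = Pi.single 0 1) :
    IsUnit (P.submatrix Fin.succ Fin.succ) := by
  rw [isUnit_iff_isUnit_det] at hP ⊢
  rw [det_succ_row_zero, h0, Fin.sum_univ_succ] at hP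
  simpa [Pi.single_apply, Fin.succ_ne_zero] using hP

theorem Matrix.image_closure_mulVec_add {ι : Type*} [Fintype ι] [DecidableEq ι]
    {A : Matrix ι ι ℝ} (hA : IsUnit A) (b : ι → ℝ) (S : Set (ι → ℝ)) :
    (fun y => A *ᵥ y + b) '' closure S = closure ((fun y => A *ᵥ y + b) '' S) :=
  ((A.toLinearEquiv' hA.invertible).toContinuousLinearEquiv.toHomeomorph.trans
    (Homeomorph.addRight b)).image_closure S

section Dehomogenize

variable {K : Type*} [Field K] {n : ℕ}

def dehomogenize (x : Fin (n + 1) → K) : Fin n → K := fun i => x i.succ / x 0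

theorem submatrix_mulVec_dehomogenize_add (Q : Matrix (Fin (n + 1)) (Fin (n + 1)) K)
    {x : Fin (n + 1) → K} (hx : x 0 ≠ 0) (hQx : (Q *ᵥ x) 0 = x 0) :
    Q.submatrix Fin.succ Fin.succ *ᵥ dehomogenize x + (fun i => Q i.succ 0) =
      dehomogenize (Q *ᵥ x) := by
  funext i
  simp only [dehomogenize, hQx]
  simp only [dehomogenize, Pi.add_apply, mulVec, dotProduct, submatrix_apply,
    Fin.sum_univ_succ (n := n), mul_div_assoc', ← Finset.sum_div]
  field_simp
  ring

theorem image_dehomogenize_eq {M : Type*} (Q : Matrix (Fin (n + 1)) (Fin (n + 1)) K)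
    {f g : M → Fin (n + 1) → K} (hfg : ∀ σ, Q *ᵥ f σ = g σ) (h0 : ∀ σ, f σ 0 = g σ 0) :
    (fun y => Q.submatrix Fin.succ Fin.succ *ᵥ y + fun i => Q i.succ 0) ''
        {y | ∃ σ, f σ 0 ≠ 0 ∧ y = dehomogenize (f σ)} =
      {y | ∃ σ, g σ 0 ≠ 0 ∧ y = dehomogenize (g σ)} := by
  have hmap : ∀ σ, f σ 0 ≠ 0 → Q.submatrix Fin.succ Fin.succ *ᵥ dehomogenize (f σ) +
      (fun i => Q i.succ 0) = dehomogenize (g σ) := fun σ hσ => by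
    rw [submatrix_mulVec_dehomogenize_add Q hσ (by rw [hfg, h0]), hfg]
  ext y
  constructor
  · rintro ⟨_, ⟨σ, hσ, rfl⟩, rfl⟩
    exact ⟨σ, h0 σ ▸ hσ, hmap σ hσ⟩
  · rintro ⟨σ, hσ, rfl⟩
    rw [← h0] at hσ
    exact ⟨_, ⟨σ, hσ, rfl⟩, hmap σ hσ⟩

end Dehomogenize

theorem stmt5_general {M : Type*} [AddCommMonoid M] (n : ℕ)
    (ι₁ ι₂ : M → (Fin (n + 1) → ℝ))
    (hadd₁ : ∀ a b : M, ι₁ (a + b) = ι₁ a + ι₁ b)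
    (hadd₂ : ∀ a b : M, ι₂ (a + b) = ι₂ a + ι₂ b)
    (hinj₁ : Function.Injective ι₁) (hinj₂ : Function.Injective ι₂)
    (hfst : ∀ σ : M, ι₁ σ 0 = ι₂ σ 0)
    (hgrp₁ : (AddSubgroup.closure (Set.range ι₁) : Set (Fin (n + 1) → ℝ)) =
      {x | ∀ i, ∃ m : ℤ, x i = (m : ℝ)})
    (hgrp₂ : (AddSubgroup.closure (Set.range ι₂) : Set (Fin (n + 1) → ℝ)) =
      {x | ∀ i, ∃ m : ℤ, x i = (m : ℝ)}) :
    ∃ A : Matrix (Fin n) (Fin n) ℤ, IsUnit A ∧ ∃ b : Fin n → ℤ,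
      (fun y : Fin n → ℝ =>
          (A.map (Int.cast : ℤ → ℝ)).mulVec y + fun i : Fin n => (b i : ℝ)) ''
        closure {y : Fin n → ℝ | ∃ σ : M, ι₁ σ 0 ≠ 0 ∧
          y = fun i : Fin n => ι₁ σ i.succ / ι₁ σ 0} =
      closure {y : Fin n → ℝ | ∃ σ : M, ι₂ σ 0 ≠ 0 ∧
          y = fun i : Fin n => ι₂ σ i.succ / ι₂ σ 0} := by
  obtain ⟨κ₁, hκ₁, htop₁⟩ := exists_intCast_lift_of_closure_range_eq (.mk' ι₁ hadd₁) hgrp₁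
  obtain ⟨κ₂, hκ₂, htop₂⟩ := exists_intCast_lift_of_closure_range_eq (.mk' ι₂ hadd₂) hgrp₂
  replace hκ₁ : ∀ σ i, (κ₁ σ i : ℝ) = ι₁ σ i := fun σ => congrFun (hκ₁ σ)
  replace hκ₂ : ∀ σ i, (κ₂ σ i : ℝ) = ι₂ σ i := fun σ => congrFun (hκ₂ σ)
  obtain ⟨P, hPunit, hP⟩ := exists_isUnit_mulVec_eq
    (fun a b h => hinj₁ (funext fun i => by rw [← hκ₁, ← hκ₁, h]))
    (fun a b h => hinj₂ (funext fun i => by rw [← hκ₂, ← hκ₂, h])) htop₁ htop₂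
  have hP0 : P 0 = Pi.single 0 1 := row_eq_single_of_mulVec_apply_eq htop₁ <| by
    rintro _ ⟨σ, rfl⟩
    exact Int.cast_injective (α := ℝ) (by rw [hP, hκ₂, hκ₁, hfst])
  have hPι : ∀ σ, P.map (Int.cast : ℤ → ℝ) *ᵥ ι₁ σ = ι₂ σ := fun σ => funext fun i => by
    rw [← hκ₂, ← hP, ← funext (hκ₁ σ)]
    exact (RingHom.map_mulVec (Int.castRingHom ℝ) P (κ₁ σ) i).symm
  have hA := isUnit_submatrix_succ_succ hPunit hP0
  refine ⟨_, hA, fun i => P i.succ 0, ?_⟩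
  rw [image_closure_mulVec_add (A := (P.submatrix Fin.succ Fin.succ).map Int.cast)
    (hA.map (Int.castRingHom ℝ).mapMatrix)]
  exact congrArg closure (image_dehomogenize_eq (P.map Int.cast) hPι hfst)

theorem stmt5 {M : Type*} [AddCommMonoid M] (n : ℕ)
    (ι₁ ι₂ : M → (Fin (n + 1) → ℝ))
    (hadd₁ : ∀ a b : M, ι₁ (a + b) = ι₁ a + ι₁ b)
    (hadd₂ : ∀ a b : M, ι₂ (a + b) = ι₂ a + ι₂ b)
    (hinj₁ : Function.Injective ι₁) (hinj₂ : Function.Injective ι₂)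
    (hfst : ∀ σ : M, ι₁ σ 0 = ι₂ σ 0)
    (hdegint : ∀ σ : M, ∃ m : ℤ, ι₁ σ 0 = (m : ℝ))
    (hgrp₁ : (AddSubgroup.closure (Set.range ι₁) : Set (Fin (n + 1) → ℝ)) =
      {x | ∀ i, ∃ m : ℤ, x i = (m : ℝ)})
    (hgrp₂ : (AddSubgroup.closure (Set.range ι₂) : Set (Fin (n + 1) → ℝ)) =
      {x | ∀ i, ∃ m : ℤ, x i = (m : ℝ)}) :
    ∃ A : Matrix (Fin n) (Fin n) ℤ, IsUnit A ∧ ∃ b : Fin n → ℤ,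
      (fun y : Fin n → ℝ =>
          (A.map (Int.cast : ℤ → ℝ)).mulVec y + fun i : Fin n => (b i : ℝ)) ''
        closure {y : Fin n → ℝ | ∃ σ : M, ι₁ σ 0 ≠ 0 ∧
          y = fun i : Fin n => ι₁ σ i.succ / ι₁ σ 0} =
      closure {y : Fin n → ℝ | ∃ σ : M, ι₂ σ 0 ≠ 0 ∧
          y = fun i : Fin n => ι₂ σ i.succ / ι₂ σ 0} :=
  stmt5_general n ι₁ ι₂ hadd₁ hadd₂ hinj₁ hinj₂ hfst hgrp₁ hgrp₂
end

section
/- Let r ≥ 1 and let φ : ℤ^r → ℤ^r be a group automorphism that is order-preserving for the lexicographic order on ℤ^r with first coordinate most significant (x ≤_lex y implies φ(x) ≤_lex φ(y)). Then, with e₁, …, e_r the standard basis, φ(e_i) − e_i lies in the subgroup generated by e_{i+1}, …, e_r for every i; i.e. the matrix of φ in the standard basis is lower triangular with all diagonal entries equal to 1 (in particular φ ∈ SL_r(ℤ) is unipotent). -/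
/-! For `i' < i`, every multiple of `e_i` lies lexicographically below `e_{i'}`, while some
multiple of a positive vector exceeds any vector vanishing below its leading index. Hence, for a
strictly monotone additive `φ`, the leading index of `φ e_i` is a strictly monotone function of
`i`, i.e. the identity of the finite index set: the matrix of `φ` is lower triangular with positive
diagonal. The same holds for `φ⁻¹`, and the `i`-th diagonal entry of `φ ∘ φ⁻¹ = 1` is the product
of two positive integers, so both equal `1`. -/

/-- Lexicographic order on `ℤ^r`, first coordinate most significant. -/
def zlexLE {r : ℕ} (x y : Fin r → ℤ) : Prop :=
  (∃ i : Fin r, x i < y i ∧ ∀ j : Fin r, j < i → x j = y j) ∨ x = y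

open Function

section LexInt

variable {ι : Type*} [LinearOrder ι] [DecidableEq ι]

theorem toLex_zero_lt_single (i : ι) : toLex (0 : ι → ℤ) < toLex (Pi.single i 1 : ι → ℤ) :=
  ⟨i, fun j hj => by simp [hj.ne], by simp⟩

theorem toLex_zsmul_single_lt_single {i' i : ι} (h : i' < i) (n : ℤ) :
    toLex (n • Pi.single i 1 : ι → ℤ) < toLex (Pi.single i' 1 : ι → ℤ) :=
  ⟨i', fun j hj => by simp [hj.ne, (hj.trans h).ne], by simp [h.ne]⟩

omit [DecidableEq ι] in
theorem exists_toLex_lt_zsmul {x y : ι → ℤ} {a : ι} (hxa : 0 < x a) (hx : ∀ j < a, x j = 0)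
    (hy : ∀ j < a, y j = 0) : ∃ n : ℤ, toLex y < toLex (n • x) := by
  refine ⟨|y a| + 1, a, fun j hj => by simp [hx j hj, hy j hj], ?_⟩
  show y a < (|y a| + 1) * x a
  nlinarith [le_abs_self (y a), abs_nonneg (y a)]

theorem apply_single_lowerTriangular_of_strictMono [Finite ι] (φ : (ι → ℤ) →+ (ι → ℤ))
    (hφ : StrictMono (toLex ∘ φ ∘ ofLex)) (i : ι) :
    0 < φ (Pi.single i 1) i ∧ ∀ j < i, φ (Pi.single i 1) j = 0 := by
  have hlead : ∀ k, ∃ a, (∀ j < a, φ (Pi.single k 1) j = 0) ∧ 0 < φ (Pi.single k 1) a := by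
    intro k
    obtain ⟨a, hzero, hpos⟩ := hφ (toLex_zero_lt_single k)
    exact ⟨a, fun j hj => by simpa using (hzero j hj).symm, by simpa using hpos⟩
  choose f hzero hpos using hlead
  have hf : StrictMono f := by
    intro i' i hi
    by_contra! hle
    obtain ⟨n, hn⟩ := exists_toLex_lt_zsmul (hpos i) (hzero i)
      fun j hj => hzero i' j (hj.trans_le hle)
    have hlt := hφ (toLex_zsmul_single_lt_single hi n)
    simp only [comp_apply, ofLex_toLex, map_zsmul] at hlt
    exact lt_asymm hn hlt
  have hfi : f i = i := hf.apply_eq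
  exact ⟨by simpa only [hfi] using hpos i, by simpa only [hfi] using hzero i⟩

theorem apply_self_eq_mul_of_triangular [Fintype ι] (φ : (ι → ℤ) →+ (ι → ℤ))
    (htri : ∀ k, ∀ j < k, φ (Pi.single k 1) j = 0) {x : ι → ℤ} {i : ι}
    (hx : ∀ j < i, x j = 0) : φ x i = x i * φ (Pi.single i 1) i := by
  have hsingle : ∀ k, φ (Pi.single k (x k)) i = x k * φ (Pi.single k 1) i := fun k => by
    rw [← smul_eq_mul, ← Pi.smul_apply, ← map_zsmul, ← Pi.single_smul, smul_eq_mul, mul_one]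
  conv_lhs => rw [← Finset.univ_sum_single x]
  rw [map_sum, Finset.sum_apply, Finset.sum_eq_single i, hsingle]
  · intro k _ hki
    rcases hki.lt_or_gt with hk | hk
    · simp [hx k hk]
    · rw [hsingle, htri k i hk, mul_zero]
  · simp

end LexInt

theorem zlexLE_iff_toLex_le {r : ℕ} {x y : Fin r → ℤ} : zlexLE x y ↔ toLex x ≤ toLex y := by
  rw [le_iff_lt_or_eq, toLex_inj, zlexLE]
  exact or_congr_left (exists_congr fun _ => and_comm)

theorem strictMono_symm_of_lex {ι : Type*} [LinearOrder ι] [WellFoundedLT ι]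
    {e : (ι → ℤ) ≃ (ι → ℤ)} (he : StrictMono (toLex ∘ e ∘ ofLex)) :
    StrictMono (toLex ∘ e.symm ∘ ofLex) :=
  fun a b hab => he.lt_iff_lt.1 (by simpa using hab)

theorem stmt7_general (r : ℕ) (φ : (Fin r → ℤ) ≃+ (Fin r → ℤ))
    (hmono : ∀ x y : Fin r → ℤ, zlexLE x y → zlexLE (φ x) (φ y)) :
    ∀ i : Fin r, φ (Pi.single i 1) i = 1 ∧
      ∀ j : Fin r, j < i → φ (Pi.single i 1) j = 0 := by
  have hφ : StrictMono (toLex ∘ φ ∘ ofLex) :=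
    Monotone.strictMono_of_injective
      (fun a b hab => zlexLE_iff_toLex_le.1 (hmono _ _ (zlexLE_iff_toLex_le.2 hab)))
      (toLex.injective.comp (φ.injective.comp ofLex.injective))
  have hψ : StrictMono (toLex ∘ φ.symm ∘ ofLex) := strictMono_symm_of_lex (e := φ.toEquiv) hφ
  intro i
  obtain ⟨hpos, htri⟩ := apply_single_lowerTriangular_of_strictMono φ.toAddMonoidHom hφ i
  obtain ⟨-, htri'⟩ := apply_single_lowerTriangular_of_strictMono φ.symm.toAddMonoidHom hψ i
  have hdiag := apply_self_eq_mul_of_triangular φ.toAddMonoidHom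
    (fun k => (apply_single_lowerTriangular_of_strictMono φ.toAddMonoidHom hφ k).2) htri'
  simp only [AddEquiv.coe_toAddMonoidHom, AddEquiv.apply_symm_apply, Pi.single_eq_same] at hdiag
  exact ⟨Int.eq_one_of_mul_eq_one_left hpos.le hdiag.symm, htri⟩

theorem stmt7 (r : ℕ) (hr : 1 ≤ r) (φ : (Fin r → ℤ) ≃+ (Fin r → ℤ))
    (hmono : ∀ x y : Fin r → ℤ, zlexLE x y → zlexLE (φ x) (φ y)) :
    ∀ i : Fin r, φ (Pi.single i 1) i = 1 ∧
      ∀ j : Fin r, j < i → φ (Pi.single i 1) j = 0 :=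
  stmt7_general r φ hmono
end

section
/- Let r ≥ 1 and let Γ be a subgroup of ℝ^r, equipped with the order induced by the lexicographic order on ℝ^r with first coordinate most significant, and let deg : Γ → ℤ be a surjective, monotone group homomorphism. Assume there exists x ∈ Γ with x₁ ≠ 0. Then there is a real number t > 0 such that x₁ = t·deg(x) for every x ∈ Γ; in particular Γ is contained in tℤ × ℝ^{r−1}. -/
/-!
Pick `g ∈ Γ` with `deg g = 1` and put `t = g₁`. An element `y` of degree `0` with `y₁ > 0`
would, by the Archimedean property, have a multiple `n • y` lexicographically above `g` though
of degree `0 < 1`; so the kernel of `deg` lies in `x₁ = 0`. Applying this to `x - deg x • g`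
gives `x₁ = t · deg x`. Monotonicity at `g` versus `0` gives `t ≥ 0`, and `t ≠ 0` because some
`x₁` is nonzero.
-/

/-- Strict lexicographic order on `ℝ^r`, first coordinate most significant. -/
def rlexLT {r : ℕ} (x y : Fin r → ℝ) : Prop :=
  ∃ i : Fin r, x i < y i ∧ ∀ j : Fin r, j < i → x j = y j

/-- Lexicographic order on `ℝ^r`, first coordinate most significant. -/
def rlexLE {r : ℕ} (x y : Fin r → ℝ) : Prop :=
  rlexLT x y ∨ x = y

section FirstCoordinate

variable {G : Type*} [AddGroup G] (f : G →+ ℝ) (deg : G →+ ℤ)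
  (hmono : ∀ x y, f x < f y → deg x ≤ deg y)

include hmono

theorem not_pos_of_deg_eq_zero {g : G} (hg : 0 < deg g) {y : G} (hy : deg y = 0) :
    ¬ 0 < f y := by
  intro hpos
  obtain ⟨n, hn⟩ := exists_lt_nsmul hpos (f g)
  have hle := hmono g (n • y) (by rwa [map_nsmul])
  rw [map_nsmul, hy, smul_zero] at hle
  omega

theorem map_eq_zero_of_deg_eq_zero {g : G} (hg : 0 < deg g) {y : G} (hy : deg y = 0) :
    f y = 0 := by
  rcases lt_trichotomy (f y) 0 with hneg | hzero | hpos
  · exact absurd (by simpa using hneg)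
      (not_pos_of_deg_eq_zero f deg hmono hg (y := -y) (by simp [hy]))
  · exact hzero
  · exact absurd hpos (not_pos_of_deg_eq_zero f deg hmono hg hy)

theorem map_eq_mul_deg {g : G} (hg : deg g = 1) (x : G) : f x = f g * deg x := by
  have hker : deg (-(deg x • g) + x) = 0 := by simp [hg]
  have := map_eq_zero_of_deg_eq_zero f deg hmono (hg ▸ one_pos) hker
  rw [map_add, map_neg, map_zsmul, zsmul_eq_mul] at this
  linarith

theorem map_nonneg_of_deg_eq_one {g : G} (hg : deg g = 1) : 0 ≤ f g := by
  by_contra! hneg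
  have := hmono g 0 (by rwa [map_zero])
  rw [hg, map_zero] at this
  omega

end FirstCoordinate

theorem rlexLT_of_head_lt {r : ℕ} (hr : 0 < r) {x y : Fin r → ℝ}
    (h : x ⟨0, hr⟩ < y ⟨0, hr⟩) : rlexLT x y :=
  ⟨⟨0, hr⟩, h, fun _ hj => absurd hj (Nat.not_lt_zero _)⟩

theorem stmt9 (r : ℕ) (hr : 1 ≤ r) (Γ : AddSubgroup (Fin r → ℝ))
    (deg : ↥Γ →+ ℤ) (hsurj : Function.Surjective deg)
    (hmono : ∀ x y : ↥Γ, rlexLE (x : Fin r → ℝ) (y : Fin r → ℝ) → deg x ≤ deg y)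
    (hex : ∃ x : ↥Γ, (x : Fin r → ℝ) ⟨0, hr⟩ ≠ 0) :
    ∃ t : ℝ, 0 < t ∧ (∀ x : ↥Γ, (x : Fin r → ℝ) ⟨0, hr⟩ = t * (deg x : ℝ)) ∧
      ∀ x : ↥Γ, ∃ m : ℤ, (x : Fin r → ℝ) ⟨0, hr⟩ = t * (m : ℝ) := by
  let f : ↥Γ →+ ℝ := (Pi.evalAddMonoidHom (fun _ => ℝ) ⟨0, hr⟩).comp Γ.subtype
  have hmono' : ∀ x y, f x < f y → deg x ≤ deg y :=
    fun x y h => hmono x y (Or.inl (rlexLT_of_head_lt hr h))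
  obtain ⟨g, hg⟩ := hsurj 1
  have hf : ∀ x, f x = f g * deg x := map_eq_mul_deg f deg hmono' hg
  obtain ⟨x, hx⟩ := hex
  have ht : f g ≠ 0 := fun h0 => hx (by simpa [f, h0] using hf x)
  exact ⟨f g, (map_nonneg_of_deg_eq_one f deg hmono' hg).lt_of_ne' ht, hf,
    fun x => ⟨deg x, hf x⟩⟩
end

section
/- Let r ≥ 1 and, for i = 1, …, r+1, let K_i = {x ∈ ℝ^r : x_j = 0 for all j ≤ r − i + 1} (so K₁ = {0} and K_{r+1} = ℝ^r), each an isolated subgroup of ℝ^r with the lexicographic order (first coordinate most significant). Let Γ ⊆ ℝ^r be a subgroup, with the induced lexicographic order, such that Γ ∩ K_i ≠ Γ ∩ K_{i+1} for every i = 1, …, r. Then a subgroup H ⊆ Γ is isolated (with respect to the induced order on Γ) if and only if H = Γ ∩ K_i for some i ∈ {1, …, r+1}. -/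
open scoped Classical

/-- Lexicographic absolute value on `ℝ^r`: `max(x, -x)` for the lexicographic order. -/
noncomputable def rlexAbs {r : ℕ} (x : Fin r → ℝ) : Fin r → ℝ :=
  if rlexLE x (-x) then -x else x

/-- `H` is an isolated subgroup of `Γ` with respect to the order induced on `Γ` by the
lexicographic order of `ℝ^r`. -/
def IsolatedIn {r : ℕ} (Γ H : AddSubgroup (Fin r → ℝ)) : Prop :=
  ∀ γ ∈ H, ∀ η ∈ Γ, rlexLE (rlexAbs η) (rlexAbs γ) → η ∈ H

/-- The isolated subgroup `K_i = {x : x_j = 0 for all (1-based) j ≤ r - i + 1}` of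
`ℝ^r_lex`, for `1 ≤ i ≤ r + 1`; in 0-based terms, `x_j = 0` whenever `j + i ≤ r`. -/
def Ksub (r i : ℕ) : AddSubgroup (Fin r → ℝ) where
  carrier := {x | ∀ j : Fin r, (j : ℕ) + i ≤ r → x j = 0}
  add_mem' := by
    intro a b ha hb j hj
    simp only [Pi.add_apply, ha j hj, hb j hj, add_zero]
  zero_mem' := by intro j hj; rfl
  neg_mem' := by
    intro a ha j hj
    simp only [Pi.neg_apply, ha j hj, neg_zero]


/-!
Each `Γ ∩ K_i` is isolated: an element outside `K_i` has its leading nonzero coordinate among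
those that vanish on `K_i`, so its absolute value exceeds that of every element of `K_i`.
Conversely, if `H` is isolated and `i` is largest with `Γ ∩ K_i ⊆ H`, then `H ⊆ K_i`: every
element of `K_{i+1}` vanishes before the leading coordinate of any `γ ∈ H` outside `K_i`, so
by the Archimedean property some multiple `N γ ∈ H` dominates every element of `Γ ∩ K_{i+1}`,
forcing `Γ ∩ K_{i+1} ⊆ H`.
-/

lemma not_rlexLE_of_rlexLT {r : ℕ} {x y : Fin r → ℝ} (h : rlexLT y x) : ¬ rlexLE x y := by
  obtain ⟨i, hi, hpre⟩ := h
  rintro (⟨k, hk, hpre'⟩ | rfl)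
  · rcases lt_trichotomy k i with hki | rfl | hik
    · linarith [hpre k hki]
    · linarith
    · linarith [hpre' i hik]
  · exact lt_irrefl _ hi

lemma rlexAbs_apply_eq_zero {r : ℕ} {x : Fin r → ℝ} {j : Fin r} (h : x j = 0) :
    rlexAbs x j = 0 := by
  unfold rlexAbs
  split <;> simp [h]

lemma rlexAbs_apply_of_forall_lt_eq_zero {r : ℕ} {x : Fin r → ℝ} {m : Fin r}
    (hx : ∀ j < m, x j = 0) : rlexAbs x m = |x m| := by
  have hpre : ∀ j < m, x j = (-x) j := fun j hj => by simp [hx j hj]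
  rcases lt_trichotomy (x m) 0 with hneg | hzero | hpos
  · have hle : rlexLE x (-x) := Or.inl ⟨m, by simp only [Pi.neg_apply]; linarith, hpre⟩
    simp [rlexAbs, hle, abs_of_neg hneg]
  · rw [rlexAbs_apply_eq_zero hzero, hzero, abs_zero]
  · have hnle : ¬ rlexLE x (-x) := not_rlexLE_of_rlexLT
      ⟨m, by simp only [Pi.neg_apply]; linarith, fun j hj => (hpre j hj).symm⟩
    simp [rlexAbs, hnle, abs_of_pos hpos]

lemma rlexLT_rlexAbs_of_abs_lt {r : ℕ} {x y : Fin r → ℝ} {m : Fin r}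
    (hx : ∀ j < m, x j = 0) (hy : ∀ j < m, y j = 0) (h : |x m| < |y m|) :
    rlexLT (rlexAbs x) (rlexAbs y) := by
  refine ⟨m, ?_, fun j hj => ?_⟩
  · rwa [rlexAbs_apply_of_forall_lt_eq_zero hx, rlexAbs_apply_of_forall_lt_eq_zero hy]
  · rw [rlexAbs_apply_eq_zero (hx j hj), rlexAbs_apply_eq_zero (hy j hj)]

lemma Ksub_one (r : ℕ) : Ksub r 1 = ⊥ := by
  ext x
  refine ⟨fun hx => funext fun j => hx j (by omega), ?_⟩
  rintro rfl
  exact (Ksub r 1).zero_mem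

lemma exists_first_ne_zero_of_notMem_Ksub {r i : ℕ} {x : Fin r → ℝ} (hx : x ∉ Ksub r i) :
    ∃ m : Fin r, (m : ℕ) + i ≤ r ∧ x m ≠ 0 ∧ ∀ j < m, x j = 0 := by
  have hne : ∃ j : Fin r, (j : ℕ) + i ≤ r ∧ x j ≠ 0 := by
    by_contra! h
    exact hx h
  obtain ⟨j₀, hj₀i, hj₀⟩ := hne
  obtain ⟨m, hm, hmin⟩ := wellFounded_lt.has_min {j : Fin r | x j ≠ 0} ⟨j₀, hj₀⟩
  have hmj₀ : (m : ℕ) ≤ j₀ := not_lt.mp (hmin j₀ hj₀)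
  refine ⟨m, by omega, hm, fun j hj => ?_⟩
  by_contra hxj
  exact hmin j hxj hj

lemma isolatedIn_inf_Ksub {r : ℕ} (Γ : AddSubgroup (Fin r → ℝ)) (i : ℕ) :
    IsolatedIn Γ (Γ ⊓ Ksub r i) := by
  rintro γ ⟨-, hγK⟩ η hηΓ hle
  refine ⟨hηΓ, ?_⟩
  by_contra hηK
  obtain ⟨m, hmi, hm, hlt⟩ := exists_first_ne_zero_of_notMem_Ksub hηK
  have hγ : ∀ j ≤ m, γ j = 0 := fun j hj =>
    hγK j (by have := Fin.le_def.mp hj; omega)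
  refine not_rlexLE_of_rlexLT (rlexLT_rlexAbs_of_abs_lt (fun j hj => hγ j hj.le) hlt ?_) hle
  rw [hγ m le_rfl, abs_zero]
  exact abs_pos.mpr hm

lemma IsolatedIn.inf_Ksub_succ_le {r i : ℕ} {Γ H : AddSubgroup (Fin r → ℝ)}
    (hiso : IsolatedIn Γ H) {γ : Fin r → ℝ} (hγ : γ ∈ H) (hγi : γ ∉ Ksub r i) :
    Γ ⊓ Ksub r (i + 1) ≤ H := by
  obtain ⟨m, hmi, hm, hlt⟩ := exists_first_ne_zero_of_notMem_Ksub hγi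
  rintro η ⟨hηΓ, hηK⟩
  have hη : ∀ j < m, η j = 0 := fun j hj => hηK j (by have := Fin.lt_def.mp hj; omega)
  obtain ⟨N, hN⟩ := exists_nat_gt (|η m| / |γ m|)
  refine hiso (N • γ) (H.nsmul_mem hγ N) η hηΓ
    (Or.inl (rlexLT_rlexAbs_of_abs_lt hη (fun j hj => by simp [hlt j hj]) ?_))
  rw [Pi.smul_apply, nsmul_eq_mul, abs_mul, Nat.abs_cast]
  exact (div_lt_iff₀ (abs_pos.mpr hm)).mp hN

theorem stmt10_general (r : ℕ) (Γ : AddSubgroup (Fin r → ℝ))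
    (H : AddSubgroup (Fin r → ℝ)) (hH : H ≤ Γ) :
    IsolatedIn Γ H ↔ ∃ i : ℕ, 1 ≤ i ∧ i ≤ r + 1 ∧ H = Γ ⊓ Ksub r i := by
  refine ⟨fun hiso => ?_, ?_⟩
  · let P : ℕ → Prop := fun i => Γ ⊓ Ksub r i ≤ H
    have h₁ : P 1 := by simp only [P, Ksub_one, inf_bot_eq, bot_le]
    set i := Nat.findGreatest P (r + 1)
    have h₁r : 1 ≤ r + 1 := by omega
    refine ⟨i, Nat.le_findGreatest h₁r h₁, Nat.findGreatest_le _,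
      le_antisymm (fun γ hγ => ⟨hH hγ, ?_⟩) (Nat.findGreatest_spec h₁r h₁)⟩
    by_contra hγi
    obtain ⟨m, hmi, -⟩ := exists_first_ne_zero_of_notMem_Ksub hγi
    have hi : i + 1 ≤ r + 1 := by omega
    exact Nat.findGreatest_is_greatest (Nat.lt_succ_self i) hi (hiso.inf_Ksub_succ_le hγ hγi)
  · rintro ⟨i, -, -, rfl⟩
    exact isolatedIn_inf_Ksub Γ i

theorem stmt10 (r : ℕ) (hr : 1 ≤ r) (Γ : AddSubgroup (Fin r → ℝ))
    (hchain : ∀ i : ℕ, 1 ≤ i → i ≤ r → Γ ⊓ Ksub r i ≠ Γ ⊓ Ksub r (i + 1))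
    (H : AddSubgroup (Fin r → ℝ)) (hH : H ≤ Γ) :
    IsolatedIn Γ H ↔ ∃ i : ℕ, 1 ≤ i ∧ i ≤ r + 1 ∧ H = Γ ⊓ Ksub r i :=
  stmt10_general r Γ H hH
end

section
/- Let k be an algebraically closed field and K a field extension of k of finite transcendence degree n. Let v : Kˣ → Γ be a k-valuation whose value group Γ = v(Kˣ) has rational rank n, i.e. dim_ℚ(Γ ⊗_ℤ ℚ) = n. Then for every finite-dimensional k-linear subspace W ⊆ K, the dimension of W over k equals the cardinality of the set of values v(W ∖ {0}) = {v(s) : s ∈ W, s ≠ 0}. -/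
/-!
The residue field of `v` is `k`: if a unit `u` had no residue in `k`, then, `k` being
algebraically closed, every nonzero polynomial in `u` would have value `0`, and `u` together with
elements whose values are `ℤ`-independent would be algebraically independent, `n + 1` of them.
Hence two elements of the same value differ, up to a scalar of `k`, by an element of larger
value. So elements of `W` realizing each value once span `W` (a counterexample of maximal value
could be pushed further up), while they are linearly independent because in a sum of terms of
pairwise distinct values the term of least value dominates.
-/

open scoped TensorProduct

theorem rank_int_eq_rank_rat_tensor (Γ : Type*) [AddCommGroup Γ] :
    Module.rank ℤ Γ = Module.rank ℚ (ℚ ⊗[ℤ] Γ) := by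
  rw [IsLocalization.rank_eq ℚ (nonZeroDivisors ℤ) le_rfl]
  exact (IsLocalizedModule.rank_eq (nonZeroDivisors ℤ) le_rfl (TensorProduct.mk ℤ ℚ Γ 1)).symm

theorem MvPolynomial.aeval_option_elim {R A σ : Type*} [CommSemiring R] [CommSemiring A]
    [Algebra R A] (a : A) (x : σ → A) (P : MvPolynomial (Option σ) R) :
    aeval (fun o => o.elim a x) P =
      eval₂ (Polynomial.aeval a).toRingHom x (optionEquivRight R σ P) := by
  induction P using MvPolynomial.induction_on with
  | C r => simp
  | add P Q hP hQ => simp [hP, hQ]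
  | mul_X P o hP => cases o <;> simp [hP]

theorem LinearIndependent.sum_nsmul_injective {ι M : Type*} [Fintype ι] [AddCommGroup M]
    {γ : ι → M} (hγ : LinearIndependent ℤ γ) :
    Function.Injective fun d : ι →₀ ℕ => ∑ i, d i • γ i := by
  intro d d' h
  have := Fintype.linearIndependent_iff.1 hγ (fun i => (d i : ℤ) - d' i) (by
    simp only [sub_smul, Finset.sum_sub_distrib, natCast_zsmul]
    exact sub_eq_zero.2 h)
  ext i
  simpa [sub_eq_zero] using this i

namespace AddValuation

section CommRing

variable {R Γ₀ : Type*} [CommRing R] [LinearOrderedAddCommMonoidWithTop Γ₀] (v : AddValuation R Γ₀)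

theorem map_prod {ι : Type*} (s : Finset ι) (f : ι → R) :
    v (∏ i ∈ s, f i) = ∑ i ∈ s, v (f i) := by
  classical
  induction s using Finset.induction_on with
  | empty => simp
  | insert i s hi ih => rw [Finset.prod_insert hi, Finset.sum_insert hi, v.map_mul, ih]

end CommRing

section Field

variable {k K Γ₀ : Type*} [Field k] [Field K] [Algebra k K]
  [LinearOrderedAddCommMonoidWithTop Γ₀] (v : AddValuation K Γ₀)

theorem sum_ne_zero_of_injOn [Nontrivial Γ₀] {ι : Type*} {s : Finset ι} {f : ι → K}
    (hs : s.Nonempty) (hf : ∀ i ∈ s, f i ≠ 0) (hinj : Set.InjOn (v ∘ f) s) : ∑ i ∈ s, f i ≠ 0 := by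
  classical
  obtain ⟨j, hj, hmin⟩ := s.exists_min_image (v ∘ f) hs
  have hlt : v (f j) < v (∑ i ∈ s.erase j, f i) :=
    v.map_lt_sum (v.ne_top_iff.2 (hf j hj)) fun i hi =>
      (hmin i (Finset.mem_of_mem_erase hi)).lt_of_ne fun h =>
        Finset.ne_of_mem_erase hi (hinj (Finset.mem_of_mem_erase hi) hj h.symm)
  rw [← Finset.add_sum_erase s f hj, ← v.ne_top_iff, v.map_add_eq_of_lt_left hlt, v.ne_top_iff]
  exact hf j hj

theorem map_smul_of_ne_zero (hk : ∀ a : k, a ≠ 0 → v (algebraMap k K a) = 0) {a : k}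
    (ha : a ≠ 0) (x : K) : v (a • x) = v x := by
  rw [Algebra.smul_def, v.map_mul, hk a ha, zero_add]

theorem linearIndependent_of_injective [Nontrivial Γ₀]
    (hk : ∀ a : k, a ≠ 0 → v (algebraMap k K a) = 0) {ι : Type*} {f : ι → K}
    (hf : ∀ i, f i ≠ 0) (hinj : Function.Injective (v ∘ f)) :
    LinearIndependent k f := by
  classical
  rw [linearIndependent_iff']
  intro s g hsum i hi
  by_contra hgi
  have hval : ∀ j ∈ s.filter (fun j => g j • f j ≠ 0), v (g j • f j) = v (f j) :=
    fun j hj => v.map_smul_of_ne_zero hk (left_ne_zero_of_smul (Finset.mem_filter.1 hj).2) _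
  refine v.sum_ne_zero_of_injOn (f := fun j => g j • f j)
    ⟨i, Finset.mem_filter.2 ⟨hi, smul_ne_zero hgi (hf i)⟩⟩ (fun j hj => (Finset.mem_filter.1 hj).2)
    (fun j hj j' hj' h => hinj ?_) ?_
  · simpa only [Function.comp_apply, hval j hj, hval j' hj'] using h
  · rwa [Finset.sum_filter_ne_zero]

end Field

section WithTop

variable {k K Γ : Type*} [Field k] [Field K] [Algebra k K]
  [AddCommGroup Γ] [LinearOrder Γ] [IsOrderedAddMonoid Γ]

open Classical in
noncomputable def ofNeZero (v : K → Γ)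
    (hmul : ∀ f g : K, f ≠ 0 → g ≠ 0 → v (f * g) = v f + v g)
    (hadd : ∀ f g : K, f ≠ 0 → g ≠ 0 → f + g ≠ 0 → min (v f) (v g) ≤ v (f + g)) :
    AddValuation K (WithTop Γ) :=
  AddValuation.of (fun x => if x = 0 then ⊤ else (v x : WithTop Γ)) (if_pos rfl)
    (by
      have h := hmul 1 1 one_ne_zero one_ne_zero
      rw [mul_one, left_eq_add] at h
      simp [h])
    (by
      intro x y
      by_cases hx : x = 0
      · subst hx; simp
      by_cases hy : y = 0
      · subst hy; simp
      by_cases hxy : x + y = 0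
      · simp [hxy]
      simp only [hx, hy, hxy, if_false]
      rw [← WithTop.coe_min]
      exact WithTop.coe_le_coe.2 (hadd x y hx hy hxy))
    (by
      intro x y
      by_cases hx : x = 0
      · subst hx; simp
      by_cases hy : y = 0
      · subst hy; simp
      simp [hx, hy, hmul x y hx hy])

theorem ofNeZero_apply {v : K → Γ} {hmul hadd} {x : K} (hx : x ≠ 0) :
    ofNeZero v hmul hadd x = v x := by
  simp [ofNeZero, AddValuation.of_apply, hx]

variable (v : AddValuation K (WithTop Γ))

theorem exists_lt_map_sub_smul (hres : ∀ u, v u = 0 → ∃ c : k, 0 < v (u - algebraMap k K c))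
    {x y : K} (hy : y ≠ 0) (hxy : v x = v y) : ∃ c : k, v x < v (x - c • y) := by
  have hy' : v y ≠ ⊤ := v.ne_top_iff.2 hy
  obtain ⟨c, hc⟩ := hres (x / y) (by
    rw [v.map_div, hxy, LinearOrderedAddCommGroupWithTop.sub_self_eq_zero_of_ne_top hy'])
  refine ⟨c, ?_⟩
  have hfac : x - c • y = y * (x / y - algebraMap k K c) := by
    rw [Algebra.smul_def]; field_simp
  rw [hfac, v.map_mul, hxy]
  simpa using WithTop.add_lt_add_left hy' hc

theorem le_span_of_forall_exists_map_eq
    (hres : ∀ u, v u = 0 → ∃ c : k, 0 < v (u - algebraMap k K c))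
    {W : Submodule k K} (hW : (v '' ((W : Set K) \ {0})).Finite) {s : Set K} (hs : s ⊆ W)
    (hval : ∀ x ∈ W, x ≠ 0 → ∃ y ∈ s, v y = v x) : W ≤ Submodule.span k s := by
  by_contra hle
  obtain ⟨x, hxW, hxs⟩ := Set.not_subset.1 hle
  obtain ⟨_, ⟨w, ⟨hwW, hws⟩, rfl⟩, hmax⟩ :=
    Set.exists_max_image (v '' ((W : Set K) \ Submodule.span k s)) id
      (hW.subset (Set.image_mono (Set.sdiff_subset_sdiff_right (by simp))))
    ⟨v x, x, ⟨hxW, hxs⟩, rfl⟩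
  have hw0 : w ≠ 0 := fun h => hws (h ▸ Submodule.zero_mem _)
  obtain ⟨y, hys, hyw⟩ := hval w hwW hw0
  obtain ⟨c, hc⟩ :=
    v.exists_lt_map_sub_smul hres (v.ne_top_iff.1 (hyw ▸ v.ne_top_iff.2 hw0)) hyw.symm
  have hcy : c • y ∈ Submodule.span k s := Submodule.smul_mem _ c (Submodule.subset_span hys)
  have hmem : w - c • y ∈ (W : Set K) \ Submodule.span k s :=
    ⟨W.sub_mem hwW (W.smul_mem c (hs hys)),
      fun h => hws (by simpa using (Submodule.span k s).add_mem h hcy)⟩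
  exact (hmax _ ⟨_, hmem, rfl⟩).not_gt hc

theorem finrank_eq_natCard_image (hk : ∀ a : k, a ≠ 0 → v (algebraMap k K a) = 0)
    (hres : ∀ u, v u = 0 → ∃ c : k, 0 < v (u - algebraMap k K c))
    (W : Submodule k K) [FiniteDimensional k W] :
    Module.finrank k W = Nat.card (v '' ((W : Set K) \ {0})) := by
  set S := v '' ((W : Set K) \ {0})
  have hrep : ∀ γ : S, ∃ x : W, (x : K) ≠ 0 ∧ v x = γ := fun γ => by
    obtain ⟨x, ⟨hxW, hx0⟩, hx⟩ := γ.2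
    exact ⟨⟨x, hxW⟩, hx0, hx⟩
  choose rep hrep0 hrepv using hrep
  have hli : LinearIndependent k (W.subtype ∘ rep) :=
    v.linearIndependent_of_injective hk hrep0 fun γ γ' h => Subtype.ext (by simpa [hrepv] using h)
  have : Fintype S := @Fintype.ofFinite _ (hli.of_comp).finite
  have hspan : W ≤ Submodule.span k (Set.range (W.subtype ∘ rep)) :=
    v.le_span_of_forall_exists_map_eq hres (Set.toFinite S) (by rintro _ ⟨γ, rfl⟩; simp)
      fun x hxW hx0 => ⟨_, ⟨⟨v x, x, ⟨hxW, hx0⟩, rfl⟩, rfl⟩, hrepv _⟩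
  have := FiniteDimensional.span_of_finite k (Set.finite_range (W.subtype ∘ rep))
  rw [Nat.card_eq_fintype_card]
  exact le_antisymm ((Submodule.finrank_mono hspan).trans (finrank_range_le_card _))
    hli.of_comp.fintype_card_le_finrank

end WithTop

section AlgClosed

variable {k K : Type*} [Field k] [IsAlgClosed k] [Field K] [Algebra k K]

theorem map_aeval_eq_zero {Γ₀ : Type*} [LinearOrderedAddCommMonoidWithTop Γ₀]
    (v : AddValuation K Γ₀) (hk : ∀ a : k, a ≠ 0 → v (algebraMap k K a) = 0) {u : K}
    (hu : ∀ c : k, v (u - algebraMap k K c) = 0) {p : Polynomial k} (hp : p ≠ 0) :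
    v (Polynomial.aeval u p) = 0 := by
  have hprod : ∀ s : Multiset k, v (s.map fun c => u - algebraMap k K c).prod = 0 := by
    intro s
    induction s using Multiset.induction_on with
    | empty => simp
    | cons c s ih => simp [v.map_mul, hu, ih]
  rw [(IsAlgClosed.splits p).eq_prod_roots, _root_.map_mul, Polynomial.aeval_C,
    _root_.map_multiset_prod, Multiset.map_map, v.map_mul,
    hk _ (Polynomial.leadingCoeff_ne_zero.2 hp), zero_add]
  simpa using hprod p.roots

variable {Γ : Type*} [AddCommGroup Γ] [LinearOrder Γ] [IsOrderedAddMonoid Γ]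
  (v : AddValuation K (WithTop Γ))

theorem algebraicIndependent_option_elim (hk : ∀ a : k, a ≠ 0 → v (algebraMap k K a) = 0)
    {u : K} (hu : ∀ c : k, v (u - algebraMap k K c) = 0) {ι : Type*} [Fintype ι] {x : ι → K}
    {γ : ι → Γ} (hγ : LinearIndependent ℤ γ) (hx : ∀ i, v (x i) = γ i) :
    AlgebraicIndependent k fun o : Option ι => o.elim u x := by
  rw [algebraicIndependent_iff]
  intro P hP
  by_contra hP0
  set Q := MvPolynomial.optionEquivRight k ι P
  have hQ : Q ≠ 0 := (MvPolynomial.optionEquivRight k ι).map_ne_zero_iff.2 hP0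
  -- Grouping by monomials in `x`, the terms have the pairwise distinct values `∑ i, d i • γ i`.
  have hval : ∀ d ∈ Q.support, v (Polynomial.aeval u (Q.coeff d) * ∏ i, x i ^ d i)
      = ((∑ i, d i • γ i : Γ) : WithTop Γ) := fun d hd => by
    rw [v.map_mul, v.map_aeval_eq_zero hk hu (MvPolynomial.mem_support_iff.1 hd), v.map_prod]
    simp [v.map_pow, hx, WithTop.coe_sum, WithTop.coe_nsmul]
  refine v.sum_ne_zero_of_injOn (f := fun d => Polynomial.aeval u (Q.coeff d) * ∏ i, x i ^ d i)
    (MvPolynomial.support_nonempty.2 hQ) (fun d hd => ?_) ?_ ?_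
  · rw [← v.ne_top_iff, hval d hd]; exact WithTop.coe_ne_top
  · intro d hd d' hd' h
    exact hγ.sum_nsmul_injective (WithTop.coe_injective (by simpa [hval d hd, hval d' hd'] using h))
  · rwa [MvPolynomial.aeval_option_elim, MvPolynomial.eval₂_eq'] at hP

theorem exists_pos_map_sub_algebraMap (hk : ∀ a : k, a ≠ 0 → v (algebraMap k K a) = 0)
    {n : ℕ} (htr : Algebra.trdeg k K ≤ n) {γ : Fin n → Γ} (hγ : LinearIndependent ℤ γ)
    (hγv : ∀ i, ∃ x, v x = γ i) {u : K} (hu : v u = 0) :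
    ∃ c : k, 0 < v (u - algebraMap k K c) := by
  by_contra! h
  have hu_sub : ∀ c : k, v (u - algebraMap k K c) = 0 := fun c =>
    (h c).antisymm <| v.map_le_sub hu.ge <| by
      by_cases hc : c = 0
      · simp [hc]
      · exact (hk c hc).ge
  choose x hx using hγv
  have := (v.algebraicIndependent_option_elim hk hu_sub hγ hx).lift_cardinalMk_le_trdeg.trans
    (Cardinal.lift_le.2 htr)
  simp at this

end AlgClosed

end AddValuation

theorem stmt11 {k K : Type*} [Field k] [IsAlgClosed k] [Field K] [Algebra k K]
    (n : ℕ)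
    (htr : ∃ s : Finset K, IsTranscendenceBasis k (fun i : (s : Set K) => (i : K)) ∧
      s.card = n)
    {Γ : Type*} [AddCommGroup Γ] [LinearOrder Γ] [IsOrderedAddMonoid Γ] (v : K → Γ)
    (hmul : ∀ f g : K, f ≠ 0 → g ≠ 0 → v (f * g) = v f + v g)
    (haddv : ∀ f g : K, f ≠ 0 → g ≠ 0 → f + g ≠ 0 → min (v f) (v g) ≤ v (f + g))
    (hk : ∀ a : k, a ≠ 0 → v (algebraMap k K a) = 0)
    (hval : ∀ γ : Γ, ∃ f : K, f ≠ 0 ∧ v f = γ)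
    (hrank : Module.rank ℚ (ℚ ⊗[ℤ] Γ) = n) :
    ∀ W : Submodule k K, FiniteDimensional k ↥W →
      Module.finrank k ↥W = Nat.card {γ : Γ | ∃ s : K, s ∈ W ∧ s ≠ 0 ∧ v s = γ} := by
  intro W hW
  obtain ⟨s, hs, rfl⟩ := htr
  set w := AddValuation.ofNeZero v hmul haddv
  have hw {x : K} (hx : x ≠ 0) : w x = v x := AddValuation.ofNeZero_apply hx
  have hwk (a : k) (ha : a ≠ 0) : w (algebraMap k K a) = 0 := by
    rw [hw ((map_ne_zero _).2 ha), hk a ha, WithTop.coe_zero]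
  have htrdeg : Algebra.trdeg k K ≤ s.card := by
    rw [← hs.cardinalMk_eq_trdeg]; simp
  obtain ⟨γ, hγ⟩ : ∃ γ : Fin s.card → Γ, LinearIndependent ℤ γ :=
    Module.le_rank_iff.1 ((rank_int_eq_rank_rat_tensor Γ).trans hrank).ge
  have hγv (i : Fin s.card) : ∃ x, w x = γ i := by
    obtain ⟨x, hx0, hx⟩ := hval (γ i)
    exact ⟨x, by rw [hw hx0, hx]⟩
  have himage :
      w '' ((W : Set K) \ {0}) = (↑) '' {γ : Γ | ∃ s : K, s ∈ W ∧ s ≠ 0 ∧ v s = γ} := by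
    ext g
    simp only [Set.mem_image, Set.mem_sdiff, SetLike.mem_coe, Set.mem_singleton_iff,
      Set.mem_ofPred_eq]
    exact ⟨fun ⟨x, hx, hxg⟩ => ⟨v x, ⟨x, hx.1, hx.2, rfl⟩, hw hx.2 ▸ hxg⟩,
      fun ⟨_, ⟨x, hxW, hx0, rfl⟩, hxg⟩ => ⟨x, ⟨hxW, hx0⟩, hw hx0 ▸ hxg⟩⟩
  have hres (u : K) (hu : w u = 0) : ∃ c : k, 0 < w (u - algebraMap k K c) :=
    w.exists_pos_map_sub_algebraMap hwk htrdeg hγ hγv hu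
  rw [w.finrank_eq_natCard_image hwk hres W, himage,
    Nat.card_image_of_injective WithTop.coe_injective]
end

section
/- Let K be a field, n ≥ 1, and v : Kˣ → ℤ^n a group homomorphism (v(st) = v(s) + v(t) for all nonzero s, t ∈ K). Suppose given subsets F_t(d) ⊆ K for each d ∈ ℕ and t ∈ ℝ such that F_{t'}(d) ⊆ F_t(d) whenever t ≤ t' (the filtration is decreasing) and s·s' ∈ F_{t+t'}(d+d') whenever s ∈ F_t(d) and s' ∈ F_{t'}(d') (the filtration is multiplicative). Fix B ∈ ℝ and define Σ_{v,F,B} = {(d, x, t) ∈ ℕ × ℤ^n × ℝ : t ≥ B·d and x = v(s) for some nonzero s ∈ F_t(d)} ⊆ ℝ^{n+2}. Then Σ_{v,F,B} is a subsemigroup of (ℝ^{n+2}, +), and it is asymptotically convex: for every element σ of the subgroup of ℝ^{n+2} generated by Σ_{v,F,B} that lies in the interior of the closure of the convex cone generated by Σ_{v,F,B}, there is a positive integer k with kσ ∈ Σ_{v,F,B}. -/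
/-!
`Σ` is closed under addition because `v` is a homomorphism and `F` is multiplicative.
For asymptotic convexity, the cone is convex, so `σ` is an interior point of the cone itself, and
`σ + (0, 0, ε) = ∑ c_j y_j` with `c_j > 0` and `y_j ∈ Σ`. The first `n + 1` coordinates of `σ`
and of the `y_j` are integers, so `c` is a limit of rational solutions `q` of the same linear
equations in these coordinates. For `q` close to `c` we still have `q_j > 0` and
`∑ q_j t_j > σ_t`; with `N` a common denominator, `∑ (N q_j) y_j ∈ Σ` agrees with `N σ` except
in the last coordinate, which is larger, and the filtration is decreasing in `t`.
-/

/-- The cone generated by a subset of a real vector space. -/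
def coneGen {V : Type*} [AddCommMonoid V] [Module ℝ V] (S : Set V) : Set V :=
  {x | ∃ (m : ℕ) (c : Fin m → ℝ) (y : Fin m → V),
    (∀ i, 0 ≤ c i) ∧ (∀ i, y i ∈ S) ∧ x = ∑ i, c i • y i}

/-- The semigroup `Σ_{v,F,B} ⊆ ℝ × ℝ^n × ℝ = ℝ^{n+2}` attached to a multiplicative
filtration `F` and a homomorphism `v : Kˣ → ℤ^n`. -/
def SigmaF {K : Type*} [Field K] (n : ℕ) (v : Kˣ → (Fin n → ℤ))
    (F : ℕ → ℝ → Set K) (B : ℝ) : Set (ℝ × (Fin n → ℝ) × ℝ) :=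
  {p | ∃ (d : ℕ) (t : ℝ) (s : Kˣ), B * (d : ℝ) ≤ t ∧ (s : K) ∈ F d t ∧
    p = ((d : ℝ), fun i => (v s i : ℝ), t)}

open Matrix

theorem LinearMap.exists_comp_comp_eq_self {K V W : Type*} [DivisionRing K]
    [AddCommGroup V] [Module K V] [AddCommGroup W] [Module K W] (f : V →ₗ[K] W) :
    ∃ g : W →ₗ[K] V, f ∘ₗ g ∘ₗ f = f := by
  obtain ⟨s, hs⟩ := f.rangeRestrict.exists_rightInverse_of_surjective f.range_rangeRestrict
  obtain ⟨g, rfl⟩ := LinearMap.exists_extend s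
  refine ⟨g, LinearMap.ext fun x => ?_⟩
  exact congr(((LinearMap.range f).subtype ($hs (f.rangeRestrict x))))

theorem Matrix.exists_mul_mul_self_eq {K m n : Type*} [Field K] [Fintype m] [Fintype n]
    [DecidableEq m] [DecidableEq n] (A : Matrix m n K) : ∃ G : Matrix n m K, A * G * A = A := by
  obtain ⟨g, hg⟩ := A.toLin'.exists_comp_comp_eq_self
  refine ⟨LinearMap.toMatrix' g, Matrix.toLin'.injective ?_⟩
  rwa [Matrix.toLin'_mul, Matrix.toLin'_mul, Matrix.toLin'_toMatrix', LinearMap.comp_assoc]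

theorem Matrix.map_ratCast_mulVec {m n : Type*} [Fintype n] (M : Matrix m n ℚ) (q : n → ℚ) :
    M.map (↑) *ᵥ (fun i => (q i : ℝ)) = fun i => ((M *ᵥ q) i : ℝ) :=
  (funext (RingHom.map_mulVec (Rat.castHom ℝ) M q)).symm

theorem Matrix.mem_closure_ratCast_solutions {m n : Type*} [Fintype m] [Fintype n]
    (A : Matrix m n ℚ) (b : m → ℚ) {c : n → ℝ} (hc : A.map (↑) *ᵥ c = fun i => (b i : ℝ)) :
    c ∈ closure ((fun q i => (q i : ℝ)) '' {q | A *ᵥ q = b}) := by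
  classical
  obtain ⟨G, hG⟩ := A.exists_mul_mul_self_eq
  have hGb : (A * G) *ᵥ b = b := by
    have : A.map (↑) *ᵥ G.map (↑) *ᵥ A.map (↑) *ᵥ c = A.map (↑) *ᵥ c := by
      rw [mulVec_mulVec, mulVec_mulVec, ← Rat.coe_castHom, ← Matrix.map_mul, ← Matrix.map_mul, hG]
    rw [hc, map_ratCast_mulVec, map_ratCast_mulVec, mulVec_mulVec] at this
    exact funext fun i => by exact_mod_cast congrFun this i
  -- As `A G A = A`, the map `Φ` retracts `ℝⁿ` onto the real solutions and maps `ℚⁿ` into the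
  -- rational ones.
  let Φ : (n → ℝ) → (n → ℝ) := fun x => x - G.map (↑) *ᵥ (A.map (↑) *ᵥ x - fun i => (b i : ℝ))
  have hΦq (q : n → ℚ) : Φ (fun i => (q i : ℝ)) = fun i => ((q - G *ᵥ (A *ᵥ q - b)) i : ℝ) := by
    have hres : (fun i => ((A *ᵥ q) i : ℝ)) - (fun i => (b i : ℝ)) =
        fun i => ((A *ᵥ q - b) i : ℝ) := by
      ext; simp
    simp only [Φ]
    rw [map_ratCast_mulVec, hres, map_ratCast_mulVec]
    ext; simp
  have hsol (q : n → ℚ) : A *ᵥ (q - G *ᵥ (A *ᵥ q - b)) = b := by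
    simp only [mulVec_sub, mulVec_mulVec, hGb]
    rw [← Matrix.mul_assoc, hG, sub_sub_cancel]
  have hdense : DenseRange (fun (q : n → ℚ) i => (q i : ℝ)) :=
    DenseRange.piMap fun _ => Rat.denseRange_cast
  have hΦ : Continuous Φ := by fun_prop
  rw [show c = Φ c by simp [Φ, hc]]
  refine closure_mono ?_ (image_closure_subset_closure_image hΦ ⟨c, hdense c, rfl⟩)
  rintro _ ⟨_, ⟨q, rfl⟩, rfl⟩
  exact ⟨_, hsol q, (hΦq q).symm⟩

theorem Rat.exists_nat_eq_mul_of_nonneg {ι : Type*} [Fintype ι] (q : ι → ℚ)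
    (hq : ∀ i, 0 ≤ q i) : ∃ N : ℕ, 0 < N ∧ ∃ a : ι → ℕ, ∀ i, (a i : ℚ) = N * q i := by
  classical
  refine ⟨∏ i, (q i).den, Finset.prod_pos fun i _ => (q i).pos, fun i =>
    (∏ i, (q i).den) / (q i).den * (q i).num.toNat, fun i => ?_⟩
  have hden : (q i).den ∣ ∏ i, (q i).den := Finset.dvd_prod_of_mem _ (Finset.mem_univ i)
  have hnum : ((q i).num.toNat : ℚ) = (q i).num := by
    exact_mod_cast Int.toNat_of_nonneg (Rat.num_nonneg.2 (hq i))
  rw [Nat.cast_mul, Nat.cast_div hden (by simp), hnum]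
  nth_rw 3 [← Rat.num_div_den (q i)]
  ring

theorem AddSubmonoid.mem_of_mem_closure_of_ne_zero {M : Type*} [AddMonoid M] {S : Set M}
    (hS : ∀ a ∈ S, ∀ b ∈ S, a + b ∈ S) {x : M} (hx : x ∈ AddSubmonoid.closure S)
    (hx0 : x ≠ 0) : x ∈ S := by
  refine (?_ : x = 0 ∨ x ∈ S).resolve_left hx0
  clear hx0
  induction hx using AddSubmonoid.closure_induction with
  | mem x hx => exact .inr hx
  | zero => exact .inl rfl
  | add a b _ _ ha hb =>
    rcases ha with rfl | ha
    · simpa using hb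
    rcases hb with rfl | hb
    · simpa using .inr ha
    exact .inr (hS a ha b hb)

theorem exists_pos_add_smul_mem_of_mem_interior {E : Type*} [AddCommGroup E] [Module ℝ E]
    [TopologicalSpace E] [ContinuousAdd E] [ContinuousSMul ℝ E] {s : Set E} {x : E}
    (hx : x ∈ interior s) (v : E) : ∃ ε : ℝ, 0 < ε ∧ x + ε • v ∈ s := by
  have : Filter.Tendsto (fun ε : ℝ => x + ε • v) (nhds 0) (nhds x) := by
    have hc : Continuous fun ε : ℝ => x + ε • v := by fun_prop
    simpa using hc.tendsto 0
  exact (this.eventually (mem_interior_iff_mem_nhds.1 hx)).exists_gt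

theorem Convex.interior_closure_eq_interior {E : Type*} [NormedAddCommGroup E]
    [NormedSpace ℝ E] [FiniteDimensional ℝ E] {s : Set E} (hs : Convex ℝ s) :
    interior (closure s) = interior s := by
  rcases (interior (closure s)).eq_empty_or_nonempty with h | h
  · rw [h, eq_comm, ← Set.subset_empty_iff, ← h]
    exact interior_mono subset_closure
  refine hs.interior_closure_eq_interior_of_nonempty_interior ?_
  rw [hs.interior_nonempty_iff_affineSpan_eq_top, eq_top_iff,
    ← hs.closure.interior_nonempty_iff_affineSpan_eq_top.1 h]
  exact affineSpan_le.2 <| closure_minimal (subset_affineSpan ℝ s)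
    (affineSpan ℝ s).closed_of_finiteDimensional

theorem convex_coneGen {V : Type*} [AddCommGroup V] [Module ℝ V] (S : Set V) :
    Convex ℝ (coneGen S) := by
  rintro _ ⟨m, c, y, hc, hy, rfl⟩ _ ⟨m', c', y', hc', hy', rfl⟩ a b ha hb -
  refine ⟨m + m', Fin.append (a • c) (b • c'), Fin.append y y', fun i => ?_, fun i => ?_, ?_⟩
  · refine Fin.addCases (fun i => ?_) (fun i => ?_) i <;> simp [mul_nonneg, *]
  · refine Fin.addCases (fun i => ?_) (fun i => ?_) i <;> simp [*]
  · simp [Fin.sum_univ_add, Finset.smul_sum, smul_smul]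

theorem nonneg_of_mem_coneGen {V : Type*} [AddCommMonoid V] [Module ℝ V] {S : Set V}
    (f : V →ₗ[ℝ] ℝ) (hS : ∀ y ∈ S, 0 ≤ f y) {x : V} (hx : x ∈ coneGen S) : 0 ≤ f x := by
  obtain ⟨m, c, y, hc, hy, rfl⟩ := hx
  simpa using Finset.sum_nonneg fun i _ => mul_nonneg (hc i) (hS _ (hy i))

theorem exists_pos_sum_smul_of_mem_coneGen {V : Type*} [AddCommMonoid V] [Module ℝ V]
    {S : Set V} {x : V} (hx : x ∈ coneGen S) :
    ∃ (ι : Type) (_ : Fintype ι) (c : ι → ℝ) (y : ι → V),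
      (∀ i, 0 < c i) ∧ (∀ i, y i ∈ S) ∧ x = ∑ i, c i • y i := by
  classical
  obtain ⟨m, c, y, hc, hy, rfl⟩ := hx
  refine ⟨{i // 0 < c i}, inferInstance, fun i => c i, fun i => y i, fun i => i.2,
    fun i => hy i, ?_⟩
  rw [← Finset.sum_subtype (Finset.univ.filter (0 < c ·)) (by simp) (fun i => c i • y i),
    Finset.sum_filter_of_ne]
  intro i _ hi
  exact (hc i).lt_of_ne' fun h => hi (by simp [h])

noncomputable def ratPoints (κ : Type*) : AddSubgroup (κ → ℝ) :=
  ((Rat.castHom ℝ).toAddMonoidHom.compLeft κ).range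

theorem mem_ratPoints {κ : Type*} {x : κ → ℝ} :
    x ∈ ratPoints κ ↔ ∃ q : κ → ℚ, (fun k => (q k : ℝ)) = x :=
  Iff.rfl

section RationalApproximation

variable {E : Type*} [AddCommGroup E] [Module ℝ E] [TopologicalSpace E] [ContinuousAdd E]
  [ContinuousSMul ℝ E] {κ : Type*} [Fintype κ] (ℓ : E →ₗ[ℝ] κ → ℝ)

theorem exists_ratCast_pos_combination {ι : Type*} [Fintype ι] {y : ι → E}
    (hy : ∀ j, ℓ (y j) ∈ ratPoints κ) {c : ι → ℝ} (hc : ∀ j, 0 < c j)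
    (hcy : ℓ (∑ j, c j • y j) ∈ ratPoints κ) {O : Set E} (hO : IsOpen O)
    (hcO : ∑ j, c j • y j ∈ O) :
    ∃ q : ι → ℚ, (∀ j, 0 < q j) ∧ ℓ (∑ j, (q j : ℝ) • y j) = ℓ (∑ j, c j • y j) ∧
      ∑ j, (q j : ℝ) • y j ∈ O := by
  choose w hw using fun j => mem_ratPoints.1 (hy j)
  obtain ⟨b, hb⟩ := mem_ratPoints.1 hcy
  let A : Matrix κ ι ℚ := Matrix.of fun k j => w j k
  have hA (r : ι → ℝ) : ℓ (∑ j, r j • y j) = A.map (↑) *ᵥ r := by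
    ext k
    simp [A, ← hw, Matrix.mulVec, dotProduct, mul_comm]
  have hU : IsOpen (Set.univ.pi (fun _ => Set.Ioi 0) ∩ (fun r : ι → ℝ => ∑ j, r j • y j) ⁻¹' O) :=
    (isOpen_set_pi Set.finite_univ fun _ _ => isOpen_Ioi).inter (hO.preimage (by fun_prop))
  obtain ⟨_, ⟨hqpos, hqO⟩, q, hq, rfl⟩ := mem_closure_iff.1
    (A.mem_closure_ratCast_solutions b ((hA c).symm.trans hb.symm)) _ hU
    ⟨fun j _ => hc j, hcO⟩
  refine ⟨q, fun j => by simpa using hqpos j (Set.mem_univ j), ?_, hqO⟩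
  rw [hA, map_ratCast_mulVec, hq, hb]

theorem exists_nsmul_mem_closure_of_mem_coneGen {S : Set E} (hS : ∀ y ∈ S, ℓ y ∈ ratPoints κ)
    {z : E} (hz : z ∈ coneGen S) (hℓz : ℓ z ∈ ratPoints κ) {O : Set E} (hO : IsOpen O)
    (hzO : z ∈ O) : ∃ N : ℕ, 0 < N ∧ ∃ z' ∈ O, ℓ z' = ℓ z ∧ N • z' ∈ AddSubmonoid.closure S := by
  obtain ⟨ι, _, c, y, hc, hyS, rfl⟩ := exists_pos_sum_smul_of_mem_coneGen hz
  obtain ⟨q, hq, hℓq, hqO⟩ :=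
    exists_ratCast_pos_combination ℓ (fun j => hS _ (hyS j)) hc hℓz hO hzO
  obtain ⟨N, hN, a, ha⟩ := Rat.exists_nat_eq_mul_of_nonneg q fun j => (hq j).le
  refine ⟨N, hN, _, hqO, hℓq, ?_⟩
  have hNa : N • ∑ j, (q j : ℝ) • y j = ∑ j, a j • y j := by
    simp only [Finset.smul_sum, ← Nat.cast_smul_eq_nsmul ℝ, smul_smul]
    congr! with j
    exact_mod_cast (ha j).symm
  rw [hNa]
  exact AddSubmonoid.sum_mem _ fun j _ =>
    AddSubmonoid.nsmul_mem _ (AddSubmonoid.subset_closure (hyS j)) _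

end RationalApproximation

def latticePart (n : ℕ) : (ℝ × (Fin n → ℝ) × ℝ) →ₗ[ℝ] (Fin (n + 1) → ℝ) :=
  (Fin.consLinearEquiv ℝ fun _ => ℝ).toLinearMap ∘ₗ LinearMap.id.prodMap (LinearMap.fst _ _ _)

theorem latticePart_apply (n : ℕ) (p : ℝ × (Fin n → ℝ) × ℝ) :
    latticePart n p = Fin.cons p.1 p.2.1 :=
  rfl

namespace SigmaF

variable {K : Type*} [Field K] {n : ℕ} {v : Kˣ → (Fin n → ℤ)} {F : ℕ → ℝ → Set K} {B : ℝ}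

theorem add_mem (hv : ∀ s t : Kˣ, v (s * t) = v s + v t)
    (hmul : ∀ (d d' : ℕ) (t t' : ℝ) (s s' : K),
      s ∈ F d t → s' ∈ F d' t' → s * s' ∈ F (d + d') (t + t'))
    {p q : ℝ × (Fin n → ℝ) × ℝ} (hp : p ∈ SigmaF n v F B) (hq : q ∈ SigmaF n v F B) :
    p + q ∈ SigmaF n v F B := by
  obtain ⟨d, t, s, hBt, hs, rfl⟩ := hp
  obtain ⟨d', t', s', hBt', hs', rfl⟩ := hq
  refine ⟨d + d', t + t', s * s', by push_cast; linarith,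
    by simpa using hmul _ _ _ _ _ _ hs hs', ?_⟩
  ext <;> simp [hv]

theorem mem_of_le (hdec : ∀ (d : ℕ) (t t' : ℝ), t ≤ t' → F d t' ⊆ F d t)
    {p q : ℝ × (Fin n → ℝ) × ℝ} (hp : p ∈ SigmaF n v F B) (h₁ : q.1 = p.1) (h₂ : q.2.1 = p.2.1)
    (h₃ : q.2.2 ≤ p.2.2) (hB : B * q.1 ≤ q.2.2) : q ∈ SigmaF n v F B := by
  obtain ⟨d, t, s, -, hs, rfl⟩ := hp
  exact ⟨d, q.2.2, s, by simpa [h₁] using hB, hdec _ _ _ h₃ hs, Prod.ext h₁ (Prod.ext h₂ rfl)⟩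

theorem latticePart_mem_ratPoints {σ : ℝ × (Fin n → ℝ) × ℝ}
    (hσ : σ ∈ AddSubgroup.closure (SigmaF n v F B)) :
    latticePart n σ ∈ ratPoints (Fin (n + 1)) := by
  refine (AddSubgroup.closure_le ((ratPoints _).comap (latticePart n).toAddMonoidHom)).2 ?_ hσ
  rintro _ ⟨d, t, s, -, -, rfl⟩
  refine mem_ratPoints.2 ⟨Fin.cons (d : ℚ) fun i => (v s i : ℚ), funext fun k => ?_⟩
  refine Fin.cases ?_ (fun i => ?_) k <;> simp [latticePart_apply]

theorem nonneg_and_le_of_mem_coneGen {p : ℝ × (Fin n → ℝ) × ℝ}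
    (hp : p ∈ coneGen (SigmaF n v F B)) : 0 ≤ p.1 ∧ B * p.1 ≤ p.2.2 := by
  constructor
  · refine nonneg_of_mem_coneGen (LinearMap.fst _ _ _) ?_ hp
    rintro _ ⟨d, t, s, -, -, rfl⟩
    simp
  · have := nonneg_of_mem_coneGen
      (LinearMap.snd ℝ _ _ ∘ₗ LinearMap.snd ℝ _ _ - B • LinearMap.fst ℝ _ _) ?_ hp
    · simpa using this
    rintro _ ⟨d, t, s, hBt, -, rfl⟩
    simpa using hBt

theorem exists_nsmul_mem (hv : ∀ s t : Kˣ, v (s * t) = v s + v t)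
    (hdec : ∀ (d : ℕ) (t t' : ℝ), t ≤ t' → F d t' ⊆ F d t)
    (hmul : ∀ (d d' : ℕ) (t t' : ℝ) (s s' : K),
      s ∈ F d t → s' ∈ F d' t' → s * s' ∈ F (d + d') (t + t'))
    {σ : ℝ × (Fin n → ℝ) × ℝ} (hσ : σ ∈ AddSubgroup.closure (SigmaF n v F B))
    (hint : σ ∈ interior (coneGen (SigmaF n v F B))) :
    ∃ N : ℕ, 0 < N ∧ N • σ ∈ SigmaF n v F B := by
  obtain ⟨δ, hδ, hleft⟩ := exists_pos_add_smul_mem_of_mem_interior hint (-1, 0, 0)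
  have hpos : 0 < σ.1 := by
    have : 0 ≤ σ.1 - δ := by simpa [sub_eq_add_neg] using (nonneg_and_le_of_mem_coneGen hleft).1
    linarith
  have hB : B * σ.1 ≤ σ.2.2 := (nonneg_and_le_of_mem_coneGen (interior_subset hint)).2
  obtain ⟨ε, hε, hup⟩ := exists_pos_add_smul_mem_of_mem_interior hint (0, 0, 1)
  have hℓ : latticePart n (σ + ε • (0, 0, 1)) = latticePart n σ := by
    simp [latticePart_apply]
  have hO : IsOpen {p : ℝ × (Fin n → ℝ) × ℝ | σ.2.2 < p.2.2} :=
    isOpen_lt continuous_const (by fun_prop)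
  obtain ⟨N, hN, z, hzO, hℓz, hNz⟩ := exists_nsmul_mem_closure_of_mem_coneGen (latticePart n)
    (fun y hy => latticePart_mem_ratPoints (AddSubgroup.subset_closure hy)) hup
    (hℓ ▸ latticePart_mem_ratPoints hσ) hO (by simpa using hε)
  rw [hℓ, latticePart_apply, latticePart_apply, Fin.cons_inj] at hℓz
  have hNzS : N • z ∈ SigmaF n v F B := by
    refine AddSubmonoid.mem_of_mem_closure_of_ne_zero (fun p hp q hq => add_mem hv hmul hp hq)
      hNz fun h => ?_
    have := congrArg Prod.fst h
    simp only [Prod.smul_fst, hℓz.1, Prod.fst_zero, smul_eq_zero] at this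
    exact this.elim hN.ne' hpos.ne'
  refine ⟨N, hN, mem_of_le hdec hNzS ?_ ?_ ?_ ?_⟩ <;> simp only [Prod.smul_fst, Prod.smul_snd]
  · rw [hℓz.1]
  · rw [hℓz.2]
  · exact nsmul_le_nsmul_right hzO.le N
  · simp only [nsmul_eq_mul, mul_left_comm B]
    exact mul_le_mul_of_nonneg_left hB N.cast_nonneg

end SigmaF

theorem stmt12_general {K : Type*} [Field K] (n : ℕ)
    (v : Kˣ → (Fin n → ℤ)) (hv : ∀ s t : Kˣ, v (s * t) = v s + v t)
    (F : ℕ → ℝ → Set K)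
    (hdec : ∀ (d : ℕ) (t t' : ℝ), t ≤ t' → F d t' ⊆ F d t)
    (hmul : ∀ (d d' : ℕ) (t t' : ℝ) (s s' : K),
      s ∈ F d t → s' ∈ F d' t' → s * s' ∈ F (d + d') (t + t'))
    (B : ℝ) :
    (∀ p ∈ SigmaF n v F B, ∀ q ∈ SigmaF n v F B, p + q ∈ SigmaF n v F B) ∧
    ∀ σ ∈ (AddSubgroup.closure (SigmaF n v F B) : Set (ℝ × (Fin n → ℝ) × ℝ)),
      σ ∈ interior (closure (coneGen (SigmaF n v F B))) →
      ∃ j : ℕ, 0 < j ∧ j • σ ∈ SigmaF n v F B := by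
  refine ⟨fun p hp q hq => SigmaF.add_mem hv hmul hp hq, fun σ hσ hint => ?_⟩
  rw [(convex_coneGen _).interior_closure_eq_interior] at hint
  exact SigmaF.exists_nsmul_mem hv hdec hmul hσ hint

theorem stmt12 {K : Type*} [Field K] (n : ℕ) (hn : 1 ≤ n)
    (v : Kˣ → (Fin n → ℤ)) (hv : ∀ s t : Kˣ, v (s * t) = v s + v t)
    (F : ℕ → ℝ → Set K)
    (hdec : ∀ (d : ℕ) (t t' : ℝ), t ≤ t' → F d t' ⊆ F d t)
    (hmul : ∀ (d d' : ℕ) (t t' : ℝ) (s s' : K),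
      s ∈ F d t → s' ∈ F d' t' → s * s' ∈ F (d + d') (t + t'))
    (B : ℝ) :
    (∀ p ∈ SigmaF n v F B, ∀ q ∈ SigmaF n v F B, p + q ∈ SigmaF n v F B) ∧
    ∀ σ ∈ (AddSubgroup.closure (SigmaF n v F B) : Set (ℝ × (Fin n → ℝ) × ℝ)),
      σ ∈ interior (closure (coneGen (SigmaF n v F B))) →
      ∃ j : ℕ, 0 < j ∧ j • σ ∈ SigmaF n v F B :=
  stmt12_general n v hv F hdec hmul B
end

section
/- Let r ≥ 1 and let Σ ⊆ ℝ^r be a subsemigroup such that the ℝ-linear span of Σ equals ℝ^r and the ℚ-linear span of Σ (the ℚ-vector subspace of ℝ^r generated by Σ) has dimension r over ℚ. Let δ : Σ → ℤ be an additive map (δ(σ + τ) = δ(σ) + δ(τ) for all σ, τ ∈ Σ). Then there exists a unique ℝ-linear form φ : ℝ^r → ℝ with φ(σ) = δ(σ) for every σ ∈ Σ. -/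
/-!
Adjoining `0` to `S` gives a submonoid on which `δ` is a monoid homomorphism, so `δ` respects
every integer relation `∑ mᵢ • sᵢ = 0` among elements of `S`. A `ℚ`-basis of `span ℚ S` chosen
inside `S` has `r` elements and `ℝ`-spans `ℝ^r`, hence is an `ℝ`-basis; let `φ` be `δ` on it.
Every `x ∈ S` satisfies a relation `z • x = ∑ mᵢ • bᵢ` over `ℤ` with `z ≠ 0`, respected by
both `φ` and `δ`, so `φ x = δ x` as `ℝ` is torsion-free. Uniqueness holds because `S` spans `ℝ^r`.
-/

open Submodule Module

section AdditiveOnSubsemigroup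

variable {M G : Type*} [AddCommMonoid M] [AddCommGroup G] {S : Set M}
  (hS : ∀ x ∈ S, ∀ y ∈ S, x + y ∈ S) {δ : M → G} (hδ : ∀ x ∈ S, ∀ y ∈ S, δ (x + y) = δ x + δ y)

def insertZeroAddSubmonoid : AddSubmonoid M where
  carrier := insert 0 S
  zero_mem' := Set.mem_insert 0 S
  add_mem' := by
    rintro x y (rfl | hx) (rfl | hy)
    · simp
    · simpa using Or.inr hy
    · simpa using Or.inr hx
    · exact Or.inr (hS x hx y hy)

include hδ in
theorem map_zero_of_zero_mem (h0 : (0 : M) ∈ S) : δ 0 = 0 := by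
  simpa using hδ 0 h0 0 h0

open Classical in
noncomputable def insertZeroAddHom : insertZeroAddSubmonoid hS →+ G where
  toFun x := if (x : M) ∈ S then δ x else 0
  map_zero' := by simpa using map_zero_of_zero_mem hδ
  map_add' := by
    rintro ⟨x, rfl | hx⟩ ⟨y, rfl | hy⟩ <;> simp [*] <;> exact map_zero_of_zero_mem hδ

theorem insertZeroAddHom_apply_of_mem {x : insertZeroAddSubmonoid hS} (hx : (x : M) ∈ S) :
    insertZeroAddHom hS hδ x = δ x := if_pos hx

variable {ι : Type*} [Fintype ι] {v : ι → M}

include hS hδ in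
theorem sum_nsmul_map_eq_of_sum_nsmul_eq (hv : ∀ i, v i ∈ S) {p q : ι → ℕ}
    (h : ∑ i, p i • v i = ∑ i, q i • v i) :
    ∑ i, p i • δ (v i) = ∑ i, q i • δ (v i) := by
  let V i : insertZeroAddSubmonoid hS := ⟨v i, Or.inr (hv i)⟩
  have hV : ∑ i, p i • V i = ∑ i, q i • V i := Subtype.ext (by simpa [V] using h)
  simpa [V, insertZeroAddHom_apply_of_mem, hv] using congrArg (insertZeroAddHom hS hδ) hV

end AdditiveOnSubsemigroup

theorem sum_zsmul_eq_sub_sum_toNat_nsmul {A ι : Type*} [AddCommGroup A] [Fintype ι]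
    (m : ι → ℤ) (w : ι → A) :
    ∑ i, m i • w i = ∑ i, (m i).toNat • w i - ∑ i, (-m i).toNat • w i := by
  rw [← Finset.sum_sub_distrib]
  refine Finset.sum_congr rfl fun i _ => ?_
  rw [← natCast_zsmul, ← natCast_zsmul, ← sub_smul, Int.toNat_sub_toNat_neg]

section IntegerRelations

variable {M G : Type*} [AddCommGroup M] [AddCommGroup G] {S : Set M}
  (hS : ∀ x ∈ S, ∀ y ∈ S, x + y ∈ S) {δ : M → G} (hδ : ∀ x ∈ S, ∀ y ∈ S, δ (x + y) = δ x + δ y)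
  {ι : Type*} [Fintype ι] {v : ι → M}

include hS hδ

theorem sum_zsmul_map_eq_zero (hv : ∀ i, v i ∈ S) {m : ι → ℤ} (h : ∑ i, m i • v i = 0) :
    ∑ i, m i • δ (v i) = 0 := by
  rw [sum_zsmul_eq_sub_sum_toNat_nsmul, sub_eq_zero] at h ⊢
  exact sum_nsmul_map_eq_of_sum_nsmul_eq hS hδ hv h

theorem zsmul_map_eq_sum_zsmul_map {x : M} (hx : x ∈ S) (hv : ∀ i, v i ∈ S) {z : ℤ}
    {m : ι → ℤ} (h : z • x = ∑ i, m i • v i) : z • δ x = ∑ i, m i • δ (v i) := by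
  have key := sum_zsmul_map_eq_zero hS hδ (v := fun o : Option ι => o.elim x v)
    (m := fun o => o.elim z (-m ·))
    (fun o => o.rec hx hv) (by simpa [Fintype.sum_option, ← sub_eq_add_neg, sub_eq_zero])
  simpa [Fintype.sum_option, ← sub_eq_add_neg, sub_eq_zero] using key

theorem AddMonoidHom.eq_of_mem_span_rat [Module ℚ M] [IsAddTorsionFree G] (f : M →+ G)
    (hv : ∀ i, v i ∈ S) (hfv : ∀ i, f (v i) = δ (v i)) {x : M} (hx : x ∈ S)
    (hxv : x ∈ span ℚ (Set.range v)) : f x = δ x := by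
  obtain ⟨z, hz, hzx⟩ : ∃ z : ℤ, z ≠ 0 ∧ z • x ∈ span ℤ (Set.range v) := by
    obtain ⟨y, hy, z, rfl⟩ := (IsLocalization.mem_span_iff (nonZeroDivisors ℤ)).1 hxv
    refine ⟨z, nonZeroDivisors.coe_ne_zero z, ?_⟩
    rwa [← Int.cast_smul_eq_zsmul ℚ, smul_smul, mul_comm, ← eq_intCast (algebraMap ℤ ℚ),
      IsLocalization.mk'_spec, map_one, one_smul]
  obtain ⟨m, hm⟩ := (mem_span_range_iff_exists_fun ℤ).1 hzx
  refine zsmul_right_injective hz ?_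
  calc z • f x = ∑ i, m i • f (v i) := by simp [← map_zsmul, ← hm]
    _ = ∑ i, m i • δ (v i) := by simp only [hfv]
    _ = z • δ x := (zsmul_map_eq_sum_zsmul_map hS hδ hx hv hm.symm).symm

end IntegerRelations

theorem exists_basis_subset_of_finrank_span_eq {k K E : Type*} [Field k] [Field K] [Algebra k K]
    [AddCommGroup E] [Module k E] [Module K E] [IsScalarTower k K E] {S : Set E}
    [FiniteDimensional k (span k S)] (hK : span K S = ⊤)
    (hk : finrank k (span k S) = finrank K E) :
    ∃ b : Basis (Fin (finrank K E)) K E, (∀ i, b i ∈ S) ∧ S ⊆ span k (Set.range b) := by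
  obtain ⟨s, hsS, hs, hli⟩ := exists_linearIndependent k S
  let B : Basis s k (span k S) :=
    (Basis.span hli).map (LinearEquiv.ofEq _ _ (by rw [Subtype.range_coe, hs]))
  have : Fintype s := FiniteDimensional.fintypeBasisIndex B
  have hSs : S ⊆ span k s := hs ▸ subset_span
  let b := basisOfTopLeSpanOfCardEqFinrank (Subtype.val : s → E)
    (by rw [Subtype.range_coe, ← hK, span_le]; exact hSs.trans (span_subset_span k K s))
    (by rw [← hk, finrank_eq_card_basis B])
  refine ⟨b.reindex (Fintype.equivFinOfCardEq (finrank_eq_card_basis b).symm), fun i => ?_, ?_⟩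
  · simpa [b] using hsS (Subtype.property _)
  · simpa [b] using hSs

theorem stmt13_general (r : ℕ) (hr : 1 ≤ r) (S : Set (Fin r → ℝ))
    (hadd : ∀ x ∈ S, ∀ y ∈ S, x + y ∈ S)
    (hspanR : Submodule.span ℝ S = ⊤)
    (hspanQ : Module.finrank ℚ ↥(Submodule.span ℚ S) = r)
    (δ : (Fin r → ℝ) → ℤ)
    (hδ : ∀ x ∈ S, ∀ y ∈ S, δ (x + y) = δ x + δ y) :
    ∃! φ : (Fin r → ℝ) →ₗ[ℝ] ℝ, ∀ x ∈ S, φ x = (δ x : ℝ) := by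
  have : FiniteDimensional ℚ (span ℚ S) := .of_finrank_pos (by omega)
  obtain ⟨b, hbS, hSb⟩ :=
    exists_basis_subset_of_finrank_span_eq hspanR (by rw [hspanQ, finrank_fin_fun])
  have hδℝ : ∀ x ∈ S, ∀ y ∈ S, (δ (x + y) : ℝ) = δ x + δ y := fun x hx y hy => by
    rw [hδ x hx y hy, Int.cast_add]
  let φ := b.constr ℝ fun i => (δ (b i) : ℝ)
  have hφ : ∀ x ∈ S, φ x = (δ x : ℝ) := fun x hx =>
    φ.toAddMonoidHom.eq_of_mem_span_rat (δ := fun x => (δ x : ℝ)) hadd hδℝ hbS (by simp [φ]) hx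
      (hSb hx)
  exact ⟨φ, hφ, fun ψ hψ => LinearMap.ext_on hspanR fun x hx => (hψ x hx).trans (hφ x hx).symm⟩

theorem stmt13 (r : ℕ) (hr : 1 ≤ r) (S : Set (Fin r → ℝ)) (hne : S.Nonempty)
    (hadd : ∀ x ∈ S, ∀ y ∈ S, x + y ∈ S)
    (hspanR : Submodule.span ℝ S = ⊤)
    (hspanQ : Module.finrank ℚ ↥(Submodule.span ℚ S) = r)
    (δ : (Fin r → ℝ) → ℤ)
    (hδ : ∀ x ∈ S, ∀ y ∈ S, δ (x + y) = δ x + δ y) :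
    ∃! φ : (Fin r → ℝ) →ₗ[ℝ] ℝ, ∀ x ∈ S, φ x = (δ x : ℝ) :=
  stmt13_general r hr S hadd hspanR hspanQ δ hδ
end

section
/- Let M be a commutative monoid, r ≥ 1, and let ι₁, ι₂ : M → ℝ^r be injective additive maps such that, for both j = 1, 2, the ℝ-linear span of ι_j(M) equals ℝ^r and the ℚ-linear span of ι_j(M) has dimension r over ℚ. Then there is a unique linear automorphism T of ℝ^r with T(ι₁(σ)) = ι₂(σ) for every σ ∈ M. Consequently, if deg : M → ℤ is an additive map and φ_j : ℝ^r → ℝ denotes the unique linear form with φ_j ∘ ι_j = deg (j = 1, 2), then ι₁(M) is linearly bounded with respect to φ₁ if and only if ι₂(M) is linearly bounded with respect to φ₂. -/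
/-- The set of nonnegative real linear combinations of the vectors `v i`. -/
def NonnegSpan {r : ℕ} (v : Fin r → (Fin r → ℝ)) : Set (Fin r → ℝ) :=
  {x | ∃ c : Fin r → ℝ, (∀ i, 0 ≤ c i) ∧ x = ∑ i, c i • v i}

/-- Linear boundedness of a subset of `ℝ^r` with respect to a linear form `φ`: containment
in the nonnegative span of a basis consisting of vectors on which `φ` is positive. -/
def LinBddWrt {r : ℕ} (φ : (Fin r → ℝ) →ₗ[ℝ] ℝ) (S : Set (Fin r → ℝ)) : Prop :=
  ∃ v : Fin r → (Fin r → ℝ), LinearIndependent ℝ v ∧ (∀ i, 0 < φ (v i)) ∧ S ⊆ NonnegSpan v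

/-!
Clearing denominators turns a `ℚ`-linear relation among the `ι₁ σ` into an equality of two
`ℕ`-combinations in `M` (injectivity of `ι₁`), which `ι₂` then satisfies as well; so `ι₁ σ ↦ ι₂ σ`
extends to a `ℚ`-linear map on the `ℚ`-span `W` of `ι₁(M)`. A `ℚ`-basis of `W` has `r` elements
and spans `ℝ^r` over `ℝ`, hence is an `ℝ`-basis, along which the map extends to an `ℝ`-linear `T`;
`T` is onto since `ι₂(M)` spans, and unique since `ι₁(M)` spans. Finally `φ₂ ∘ T = φ₁`, so `T`
carries bases witnessing linear boundedness for `φ₁` to bases witnessing it for `φ₂`.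
-/

open Function Module Submodule

theorem Finset.sum_zsmul_eq_smul_sum_qsmul {V ι : Type*} [AddCommGroup V] [Module ℚ V]
    {s : Finset ι} {z : ι → ℤ} {q : ι → ℚ} {d : ℚ} (hz : ∀ i ∈ s, (z i : ℚ) = d * q i)
    (v : ι → V) : ∑ i ∈ s, z i • v i = d • ∑ i ∈ s, q i • v i := by
  rw [Finset.smul_sum]
  refine Finset.sum_congr rfl fun i hi => ?_
  rw [← Int.cast_smul_eq_zsmul ℚ, hz i hi, mul_smul]

namespace AddMonoidHom

variable {M V₁ V₂ : Type*} [AddCommMonoid M] [AddCommGroup V₁] [AddCommGroup V₂]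

theorem sum_zsmul_eq_sub (f : M →+ V₁) {ι : Type*} (s : Finset ι) (z : ι → ℤ) (τ : ι → M) :
    ∑ i ∈ s, z i • f (τ i) =
      f (∑ i ∈ s, (z i).toNat • τ i) - f (∑ i ∈ s, (-z i).toNat • τ i) := by
  simp only [map_sum, map_nsmul, ← Finset.sum_sub_distrib, ← natCast_zsmul]
  exact Finset.sum_congr rfl fun i _ => by rw [← sub_smul, Int.toNat_sub_toNat_neg]

theorem sum_zsmul_eq_zero_of_injective {f₁ : M →+ V₁} (hf₁ : Injective f₁) (f₂ : M →+ V₂)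
    {ι : Type*} {s : Finset ι} {z : ι → ℤ} {τ : ι → M} (h : ∑ i ∈ s, z i • f₁ (τ i) = 0) :
    ∑ i ∈ s, z i • f₂ (τ i) = 0 := by
  rw [sum_zsmul_eq_sub, sub_eq_zero] at h ⊢
  rw [hf₁ h]

theorem sum_qsmul_eq_zero_of_injective [Module ℚ V₁] [Module ℚ V₂] {f₁ : M →+ V₁}
    (hf₁ : Injective f₁) (f₂ : M →+ V₂) {ι : Type*} {s : Finset ι} {q : ι → ℚ} {τ : ι → M}
    (h : ∑ i ∈ s, q i • f₁ (τ i) = 0) : ∑ i ∈ s, q i • f₂ (τ i) = 0 := by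
  obtain ⟨⟨d, hd⟩, hdq⟩ := IsLocalization.exist_integer_multiples (nonZeroDivisors ℤ) s q
  choose! z hz using hdq
  have hz' : ∀ i ∈ s, (z i : ℚ) = d * q i := fun i hi => (hz i hi).trans (zsmul_eq_mul _ _)
  have hd0 : (d : ℚ) ≠ 0 := by exact_mod_cast nonZeroDivisors.ne_zero hd
  have := sum_zsmul_eq_zero_of_injective hf₁ f₂
    (by rw [Finset.sum_zsmul_eq_smul_sum_qsmul hz', h, smul_zero])
  rwa [Finset.sum_zsmul_eq_smul_sum_qsmul hz', smul_eq_zero, or_iff_right hd0] at this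

theorem ker_linearCombination_le [Module ℚ V₁] [Module ℚ V₂] {f₁ : M →+ V₁}
    (hf₁ : Injective f₁) (f₂ : M →+ V₂) :
    LinearMap.ker (Finsupp.linearCombination ℚ f₁) ≤
      LinearMap.ker (Finsupp.linearCombination ℚ f₂) := fun c hc => by
  simp only [LinearMap.mem_ker, Finsupp.linearCombination_apply, Finsupp.sum] at hc ⊢
  exact sum_qsmul_eq_zero_of_injective hf₁ f₂ hc

theorem exists_linearMap_span_range [Module ℚ V₁] [Module ℚ V₂] {f₁ : M →+ V₁}
    (hf₁ : Injective f₁) (f₂ : M →+ V₂) :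
    ∃ L : span ℚ (Set.range f₁) →ₗ[ℚ] V₂,
      ∀ σ, L ⟨f₁ σ, subset_span (Set.mem_range_self σ)⟩ = f₂ σ := by
  let g₁ := Finsupp.linearCombination ℚ f₁
  refine ⟨(LinearMap.ker g₁).liftQ _ (ker_linearCombination_le hf₁ f₂) ∘ₗ
    g₁.quotKerEquivRange.symm.toLinearMap ∘ₗ
    (LinearEquiv.ofEq _ _ (Finsupp.range_linearCombination ℚ).symm).toLinearMap, fun σ => ?_⟩
  have hσ : LinearEquiv.ofEq _ _ (Finsupp.range_linearCombination ℚ).symm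
      ⟨f₁ σ, subset_span (Set.mem_range_self σ)⟩ =
        ⟨g₁ (Finsupp.single σ 1), LinearMap.mem_range_self _ _⟩ :=
    Subtype.ext (by simp [g₁])
  simp [hσ, LinearMap.quotKerEquivRange_symm_apply_image]

end AddMonoidHom

section RationalStructure

variable {V V' : Type*} [AddCommGroup V] [Module ℝ V] [Module ℚ V] [IsScalarTower ℚ ℝ V]
  [FiniteDimensional ℝ V] [AddCommGroup V'] [Module ℝ V'] [Module ℚ V'] [IsScalarTower ℚ ℝ V']

theorem exists_linearMap_extend_of_span_eq_top (W : Submodule ℚ V)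
    (hW : span ℝ (W : Set V) = ⊤) (hrank : finrank ℚ W = finrank ℝ V) (L : W →ₗ[ℚ] V') :
    ∃ T : V →ₗ[ℝ] V', ∀ w : W, T w = L w := by
  -- `finrank` is `0` on infinite-dimensional spaces, so `hrank` alone does not give this.
  have : FiniteDimensional ℚ W := by
    rcases (finrank ℝ V).eq_zero_or_pos with h | h
    · have := Module.finrank_zero_iff.mp h
      infer_instance
    · exact Module.finite_of_finrank_pos (hrank ▸ h)
  let b := Module.finBasis ℚ W
  have hb : span ℚ (Set.range fun i => (b i : V)) = W := by
    rw [Set.range_comp' Subtype.val b, ← W.coe_subtype, ← map_span, b.span_eq, map_subtype_top]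
  have hspan : ⊤ ≤ span ℝ (Set.range fun i => (b i : V)) := by
    rw [← hW, span_le]
    exact fun w hw => span_le_restrictScalars ℚ ℝ _ (hb.symm ▸ hw)
  let B := basisOfTopLeSpanOfCardEqFinrank _ hspan (by rw [Fintype.card_fin, hrank])
  refine ⟨B.constr ℝ fun i => L (b i), fun w => ?_⟩
  have hB : ∀ i, B i = b i := congrFun (coe_basisOfTopLeSpanOfCardEqFinrank _ _ _)
  have : (B.constr ℝ fun i => L (b i)).restrictScalars ℚ ∘ₗ W.subtype = L :=
    b.ext fun i => by
      change B.constr ℝ _ (b i : V) = _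
      rw [← hB, B.constr_basis]
  exact LinearMap.congr_fun this w

end RationalStructure

theorem AddMonoidHom.exists_linearEquiv_comp_eq {M V : Type*} [AddCommMonoid M] [AddCommGroup V]
    [Module ℝ V] [Module ℚ V] [IsScalarTower ℚ ℝ V] [FiniteDimensional ℝ V] {f₁ f₂ : M →+ V}
    (hf₁ : Injective f₁) (hspan₁ : span ℝ (Set.range f₁) = ⊤) (hspan₂ : span ℝ (Set.range f₂) = ⊤)
    (hrank : finrank ℚ (span ℚ (Set.range f₁)) = finrank ℝ V) :
    ∃ T : V ≃ₗ[ℝ] V, ∀ σ, T (f₁ σ) = f₂ σ := by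
  obtain ⟨L, hL⟩ := f₁.exists_linearMap_span_range hf₁ f₂
  have hW : span ℝ (span ℚ (Set.range f₁) : Set V) = ⊤ :=
    top_unique (hspan₁ ▸ span_mono subset_span)
  obtain ⟨T, hT⟩ := exists_linearMap_extend_of_span_eq_top _ hW hrank L
  have hTf : ∀ σ, T (f₁ σ) = f₂ σ := fun σ => (hT _).trans (hL σ)
  have hsurj : Surjective T := by
    refine LinearMap.range_eq_top.mp (top_unique ?_)
    rw [← hspan₂, span_le]
    rintro _ ⟨σ, rfl⟩
    exact ⟨f₁ σ, hTf σ⟩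
  exact ⟨.ofBijective T ⟨LinearMap.injective_iff_surjective.mpr hsurj, hsurj⟩, hTf⟩

section LinearBoundedness

variable {r : ℕ} {φ : (Fin r → ℝ) →ₗ[ℝ] ℝ} {S : Set (Fin r → ℝ)}

theorem LinBddWrt.image (T : (Fin r → ℝ) ≃ₗ[ℝ] (Fin r → ℝ)) (h : LinBddWrt φ S) :
    LinBddWrt (φ ∘ₗ T.symm.toLinearMap) (T '' S) := by
  obtain ⟨v, hv, hpos, hS⟩ := h
  refine ⟨T ∘ v, hv.map' _ T.ker, by simpa using hpos, ?_⟩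
  rintro _ ⟨x, hx, rfl⟩
  obtain ⟨c, hc, rfl⟩ := hS hx
  exact ⟨c, hc, by simp [map_sum]⟩

theorem linBddWrt_image_iff (T : (Fin r → ℝ) ≃ₗ[ℝ] (Fin r → ℝ)) :
    LinBddWrt (φ ∘ₗ T.symm.toLinearMap) (T '' S) ↔ LinBddWrt φ S := by
  refine ⟨fun h => ?_, LinBddWrt.image T⟩
  simpa [LinearMap.comp_assoc, ← LinearEquiv.coe_trans, Set.image_image] using h.image T.symm

end LinearBoundedness

theorem stmt14_general {M : Type*} [AddCommMonoid M] (r : ℕ)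
    (ι₁ ι₂ : M → (Fin r → ℝ))
    (hadd₁ : ∀ a b : M, ι₁ (a + b) = ι₁ a + ι₁ b)
    (hadd₂ : ∀ a b : M, ι₂ (a + b) = ι₂ a + ι₂ b)
    (hinj₁ : Function.Injective ι₁)
    (hspanR₁ : Submodule.span ℝ (Set.range ι₁) = ⊤)
    (hspanR₂ : Submodule.span ℝ (Set.range ι₂) = ⊤)
    (hspanQ₁ : Module.finrank ℚ ↥(Submodule.span ℚ (Set.range ι₁)) = r) :
    (∃! T : (Fin r → ℝ) ≃ₗ[ℝ] (Fin r → ℝ), ∀ σ : M, T (ι₁ σ) = ι₂ σ) ∧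
    ∀ deg : M → ℤ, (∀ a b : M, deg (a + b) = deg a + deg b) →
      ∀ φ₁ φ₂ : (Fin r → ℝ) →ₗ[ℝ] ℝ,
        (∀ σ : M, φ₁ (ι₁ σ) = (deg σ : ℝ)) → (∀ σ : M, φ₂ (ι₂ σ) = (deg σ : ℝ)) →
        (LinBddWrt φ₁ (Set.range ι₁) ↔ LinBddWrt φ₂ (Set.range ι₂)) := by
  obtain ⟨T, hT⟩ := (AddMonoidHom.mk' ι₁ hadd₁).exists_linearEquiv_comp_eq
    (f₂ := .mk' ι₂ hadd₂) hinj₁ hspanR₁ hspanR₂ (hspanQ₁.trans (finrank_fin_fun ℝ).symm)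
  have hT : ∀ σ, T (ι₁ σ) = ι₂ σ := hT
  refine ⟨⟨T, hT, fun T' hT' => ?_⟩, fun deg _ φ₁ φ₂ hφ₁ hφ₂ => ?_⟩
  · refine LinearEquiv.toLinearMap_injective (LinearMap.ext_on hspanR₁ ?_)
    rintro _ ⟨σ, rfl⟩
    simp [hT, hT']
  · have hφ : φ₂ = φ₁ ∘ₗ T.symm.toLinearMap := by
      refine LinearMap.ext_on hspanR₂ ?_
      rintro _ ⟨σ, rfl⟩
      rw [hφ₂, LinearMap.comp_apply, LinearEquiv.coe_coe, ← hT σ, T.symm_apply_apply, hφ₁]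
    have hrange : Set.range ι₂ = T '' Set.range ι₁ := by
      rw [← Set.range_comp]
      exact congrArg Set.range (funext hT).symm
    rw [hφ, hrange, linBddWrt_image_iff]

theorem stmt14 {M : Type*} [AddCommMonoid M] (r : ℕ) (hr : 1 ≤ r)
    (ι₁ ι₂ : M → (Fin r → ℝ))
    (hadd₁ : ∀ a b : M, ι₁ (a + b) = ι₁ a + ι₁ b)
    (hadd₂ : ∀ a b : M, ι₂ (a + b) = ι₂ a + ι₂ b)
    (hinj₁ : Function.Injective ι₁) (hinj₂ : Function.Injective ι₂)
    (hspanR₁ : Submodule.span ℝ (Set.range ι₁) = ⊤)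
    (hspanR₂ : Submodule.span ℝ (Set.range ι₂) = ⊤)
    (hspanQ₁ : Module.finrank ℚ ↥(Submodule.span ℚ (Set.range ι₁)) = r)
    (hspanQ₂ : Module.finrank ℚ ↥(Submodule.span ℚ (Set.range ι₂)) = r) :
    (∃! T : (Fin r → ℝ) ≃ₗ[ℝ] (Fin r → ℝ), ∀ σ : M, T (ι₁ σ) = ι₂ σ) ∧
    ∀ deg : M → ℤ, (∀ a b : M, deg (a + b) = deg a + deg b) →
      ∀ φ₁ φ₂ : (Fin r → ℝ) →ₗ[ℝ] ℝ,
        (∀ σ : M, φ₁ (ι₁ σ) = (deg σ : ℝ)) → (∀ σ : M, φ₂ (ι₂ σ) = (deg σ : ℝ)) →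
        (LinBddWrt φ₁ (Set.range ι₁) ↔ LinBddWrt φ₂ (Set.range ι₂)) :=
  stmt14_general r ι₁ ι₂ hadd₁ hadd₂ hinj₁ hspanR₁ hspanR₂ hspanQ₁
end
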